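/- arXiv:1502.00178 — 14 statements merged into one kernel-verified Lean document; each statement's English description precedes it below -/
import Mathlib

section
/- Let E be a normed space and let (Aₙ)ₙ∈ℕ be a sequence of unbounded subsets of E. Then there exists a continuous linear functional χ in the closed unit ball of the dual E' such that for every n ∈ ℕ, the set Aₙ \ {x ∈ E : |χ(x)| < 1/2} is nonempty. -/
open Filter Topology Set

/-!
By Baire's theorem in the complete space `E →L[ℝ] ℝ`, the functionals that are unbounded on a
given unbounded set `A` form a residual set: for each `k` the functionals exceeding `k` somewhere
on `A` form an open set, which is dense because adding `± t ψ`, with `ψ` a norming functional of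
a point `a ∈ A` of very large norm, makes the value at `a` exceed `k`. A functional unbounded on
every `Aₙ`, divided by its norm, takes values of modulus at least `1/2` on each `Aₙ`.
-/

section

variable {𝕜 E F : Type*} [NontriviallyNormedField 𝕜] [NormedAddCommGroup E] [NormedSpace 𝕜 E]
  [NormedAddCommGroup F] [NormedSpace 𝕜 F]

theorem ContinuousLinearMap.isOpen_setOf_exists_lt_norm_apply (A : Set E) (c : ℝ) :
    IsOpen {χ : E →L[𝕜] F | ∃ a ∈ A, c < ‖χ a‖} := by
  rw [show {χ : E →L[𝕜] F | ∃ a ∈ A, c < ‖χ a‖} = ⋃ a ∈ A, {χ | c < ‖χ a‖} by ext; simp]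
  exact isOpen_biUnion fun a _ =>
    isOpen_lt continuous_const (continuous_eval_const a : Continuous fun χ : E →L[𝕜] F => χ a).norm

end

theorem norm_le_max_norm_add_norm_sub {G : Type*} [NormedAddCommGroup G] [NormedSpace ℝ G]
    (x y : G) : ‖y‖ ≤ max ‖x + y‖ ‖x - y‖ := by
  have : 2 * ‖y‖ ≤ ‖x + y‖ + ‖x - y‖ :=
    calc 2 * ‖y‖ = ‖(2 : ℝ) • y‖ := by rw [norm_smul, Real.norm_two]
      _ = ‖(x + y) - (x - y)‖ := by congr 1; module
      _ ≤ ‖x + y‖ + ‖x - y‖ := norm_sub_le _ _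
  by_contra! h
  linarith [max_lt_iff.1 h]

section

variable {𝕜 E : Type*} [RCLike 𝕜] [NormedAddCommGroup E] [NormedSpace 𝕜 E]

theorem ContinuousLinearMap.dense_setOf_exists_lt_norm_apply {A : Set E}
    (hA : ¬ Bornology.IsBounded A) (c : ℝ) :
    Dense {χ : E →L[𝕜] 𝕜 | ∃ a ∈ A, c < ‖χ a‖} := by
  refine Metric.dense_iff.2 fun χ r hr => ?_
  simp only [isBounded_iff_forall_norm_le, not_exists, not_forall, not_le] at hA
  obtain ⟨a, ha, hca⟩ := hA (2 * c / r)
  obtain ⟨ψ, hψ, hψa⟩ : ∃ ψ : E →L[𝕜] 𝕜, ‖ψ‖ ≤ 1 ∧ ψ a = ‖a‖ := exists_dual_vector'' 𝕜 a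
  set t : 𝕜 := ((r / 2 : ℝ) : 𝕜)
  have ht : ‖t‖ = r / 2 := by rw [RCLike.norm_ofReal, abs_of_pos (by positivity)]
  have hball : ∀ s : 𝕜, ‖s‖ = r / 2 → χ + s • ψ ∈ Metric.ball χ r := fun s hs => by
    rw [Metric.mem_ball, dist_eq_norm, add_sub_cancel_left]
    calc ‖s • ψ‖ = ‖s‖ * ‖ψ‖ := norm_smul s ψ
      _ ≤ r / 2 * 1 := by rw [hs]; gcongr
      _ < r := by linarith
  have hc : c < max ‖χ a + t * ψ a‖ ‖χ a - t * ψ a‖ := by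
    refine lt_of_lt_of_le ?_ (norm_le_max_norm_add_norm_sub _ _)
    rw [hψa, norm_mul, ht, RCLike.norm_ofReal, abs_norm]
    rw [div_lt_iff₀ hr] at hca
    linarith
  rcases lt_max_iff.1 hc with h | h
  · exact ⟨χ + t • ψ, hball t ht, a, ha, h⟩
  · refine ⟨χ + (-t) • ψ, hball (-t) (by rw [norm_neg, ht]), a, ha, ?_⟩
    simpa [sub_eq_add_neg] using h

theorem ContinuousLinearMap.eventually_residual_exists_lt_norm_apply {A : Set E}
    (hA : ¬ Bornology.IsBounded A) :
    ∀ᶠ χ : E →L[𝕜] 𝕜 in residual _, ∀ k : ℕ, ∃ a ∈ A, k < ‖χ a‖ :=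
  eventually_countable_forall.2 fun k =>
    residual_of_dense_open (isOpen_setOf_exists_lt_norm_apply A k)
      (dense_setOf_exists_lt_norm_apply hA k)

end

/-- Lemma 3.1: for a sequence of unbounded subsets of a normed space `E`, there is a functional
`χ` in the closed unit ball of the dual such that each `Aₙ` is not contained in
`{x | |χ x| < 1/2}`. -/
theorem exists_functional_separating_unbounded_sets
    {E : Type*} [NormedAddCommGroup E] [NormedSpace ℝ E]
    (A : ℕ → Set E) (hA : ∀ n, ¬ Bornology.IsBounded (A n)) :
    ∃ χ : E →L[ℝ] ℝ, ‖χ‖ ≤ 1 ∧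
      ∀ n : ℕ, (A n \ {x : E | |χ x| < 1/2}).Nonempty := by
  obtain ⟨χ, hχ⟩ := (dense_of_mem_residual (eventually_countable_forall.2 fun n =>
    ContinuousLinearMap.eventually_residual_exists_lt_norm_apply (𝕜 := ℝ) (hA n))).nonempty
  obtain ⟨k, hk⟩ := exists_nat_gt (‖χ‖ / 2)
  have hχ0 : χ ≠ 0 := by
    rintro rfl
    obtain ⟨a, -, ha⟩ := hχ 0 k
    exact (Nat.cast_nonneg k).not_gt (by simpa using ha)
  refine ⟨‖χ‖⁻¹ • χ, (norm_smul_inv_norm hχ0).le, fun n => ?_⟩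
  obtain ⟨a, ha, hka⟩ := hχ n k
  refine ⟨a, ha, fun (h : |‖χ‖⁻¹ * χ a| < 1 / 2) => ?_⟩
  have hpos : 0 < ‖χ‖ := norm_pos_iff.2 hχ0
  rw [abs_mul, abs_inv, abs_norm, ← Real.norm_eq_abs, inv_mul_lt_iff₀ hpos] at h
  linarith
end

section
/- Let E be a normed space and let (Aₙ)ₙ∈ℕ be a sequence of unbounded subsets of E. Then there exist points aₙ ∈ Aₙ and norm-one functionals χₙ ∈ E' such that |χₙ(aᵢ)| > 1 for all 1 ≤ i ≤ n. -/
/-!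
Choose `xₙ ∈ Aₙ` with `‖xₙ‖ > 2 · 4ⁿ` and norm-at-most-one functionals `ψₙ` with `ψₙ xₙ = ‖xₙ‖`.
Let `gₙ = ∑_{j<n} ±4⁻ʲ ψⱼ`, where each sign is chosen so that the `j`-th term does not cancel
`g_j xⱼ`; then `|g_{i+1} xᵢ| ≥ 4⁻ⁱ ‖xᵢ‖`, and the later terms change this by at most
`4⁻ⁱ ‖xᵢ‖ / 3`. As `‖gₙ‖ ≤ 4/3`, this gives `|gₙ xᵢ| > ‖gₙ‖` for all `i < n`, so
`χₙ = g_{n+1} / ‖g_{n+1}‖` works.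
-/

section GreedySignedSum

variable {E : Type*} [SeminormedAddCommGroup E] [NormedSpace ℝ E]

noncomputable def greedySignedSum (ψ : ℕ → E →L[ℝ] ℝ) (x : ℕ → E) (c : ℕ → ℝ) :
    ℕ → E →L[ℝ] ℝ
  | 0 => 0
  | n + 1 => greedySignedSum ψ x c n +
      (if 0 ≤ greedySignedSum ψ x c n (x n) then c n else -c n) • ψ n

variable {ψ : ℕ → E →L[ℝ] ℝ} {x : ℕ → E} {c : ℕ → ℝ}

lemma norm_greedySignedSum_sub_le (hψ : ∀ j, ‖ψ j‖ ≤ 1) (hc : ∀ j, 0 ≤ c j) {m n : ℕ}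
    (hmn : m ≤ n) :
    ‖greedySignedSum ψ x c n - greedySignedSum ψ x c m‖ ≤ ∑ j ∈ Finset.Ico m n, c j := by
  rw [← dist_eq_norm, dist_comm]
  refine dist_le_Ico_sum_of_dist_le hmn fun {k} _ _ => ?_
  rw [dist_comm, dist_eq_norm, greedySignedSum, add_sub_cancel_left, norm_smul]
  calc ‖(if 0 ≤ greedySignedSum ψ x c k (x k) then c k else -c k)‖ * ‖ψ k‖
      ≤ c k * 1 :=
        mul_le_mul (by split_ifs <;> simp [abs_of_nonneg (hc k)]) (hψ k) (norm_nonneg _) (hc k)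
    _ = c k := mul_one _

lemma le_abs_greedySignedSum_succ_apply {n : ℕ} (hc : 0 ≤ c n) (hψx : 0 ≤ ψ n (x n)) :
    c n * ψ n (x n) ≤ |greedySignedSum ψ x c (n + 1) (x n)| := by
  simp only [greedySignedSum, add_apply, smul_apply, smul_eq_mul]
  split_ifs with h
  · rw [abs_of_nonneg (by positivity)]
    linarith
  · rw [abs_of_neg (by nlinarith)]
    nlinarith

lemma norm_lt_abs_greedySignedSum_apply (hψ : ∀ j, ‖ψ j‖ ≤ 1) (hψx : ∀ j, ψ j (x j) = ‖x j‖)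
    (hx : ∀ j, 2 * 4 ^ j < ‖x j‖) {i n : ℕ} (hin : i < n) :
    ‖greedySignedSum ψ x (fun j => 4⁻¹ ^ j) n‖ <
      |greedySignedSum ψ x (fun j => 4⁻¹ ^ j) n (x i)| := by
  set g := greedySignedSum ψ x (fun j => (4 : ℝ)⁻¹ ^ j)
  have hdist {m k : ℕ} (hmk : m ≤ k) : ‖g k - g m‖ ≤ 4 / 3 * 4⁻¹ ^ m := by
    refine (norm_greedySignedSum_sub_le hψ (fun j => by positivity) hmk).trans ?_
    refine (geom_sum_Ico_le_of_lt_one (by norm_num) (by norm_num)).trans_eq ?_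
    ring
  have hgn : ‖g n‖ ≤ 4 / 3 := by simpa [g, greedySignedSum] using hdist (Nat.zero_le n)
  have head : 4⁻¹ ^ i * ‖x i‖ ≤ |g (i + 1) (x i)| := by
    have := le_abs_greedySignedSum_succ_apply (ψ := ψ) (x := x) (c := fun j => (4 : ℝ)⁻¹ ^ j)
      (n := i) (by positivity) (hψx i ▸ norm_nonneg _)
    rwa [hψx i] at this
  have tail : |(g n - g (i + 1)) (x i)| ≤ 4 / 3 * 4⁻¹ ^ (i + 1) * ‖x i‖ :=
    ((g n - g (i + 1)).le_opNorm (x i)).trans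
      (mul_le_mul_of_nonneg_right (hdist hin) (norm_nonneg _))
  have large : 2 < 4⁻¹ ^ i * ‖x i‖ := by
    rw [inv_pow, inv_mul_eq_div, lt_div_iff₀ (by positivity)]
    exact hx i
  rw [sub_apply, abs_sub_comm] at tail
  calc ‖g n‖ ≤ 4 / 3 := hgn
    _ < 4⁻¹ ^ i * ‖x i‖ - 4 / 3 * 4⁻¹ ^ (i + 1) * ‖x i‖ := by rw [pow_succ]; linarith
    _ ≤ |g (i + 1) (x i)| - |g (i + 1) (x i) - g n (x i)| := sub_le_sub head tail
    _ ≤ |g n (x i)| := by linarith [abs_sub_abs_le_abs_sub (g (i + 1) (x i)) (g n (x i))]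

end GreedySignedSum

lemma one_lt_abs_inv_norm_smul_apply {E : Type*} [SeminormedAddCommGroup E] [NormedSpace ℝ E]
    {f : E →L[ℝ] ℝ} {v : E} (h : ‖f‖ < |f v|) : 1 < |(‖f‖⁻¹ • f) v| := by
  have hf : 0 < ‖f‖ := by
    refine (norm_nonneg f).lt_of_ne fun h0 => ?_
    have := f.le_opNorm v
    rw [← h0, zero_mul, Real.norm_eq_abs] at this
    linarith
  rwa [smul_apply, smul_eq_mul, abs_mul, abs_inv, abs_norm, inv_mul_eq_div, one_lt_div hf]

/-- The inductive construction in the proof of Lemma 3.1: for a sequence of unbounded subsets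
`Aₙ` of a normed space `E` there are points `aₙ ∈ Aₙ` and norm-one functionals `χₙ` with
`|χₙ(aᵢ)| > 1` for all `i ≤ n`. -/
theorem exists_points_and_norm_one_functionals
    {E : Type*} [NormedAddCommGroup E] [NormedSpace ℝ E]
    (A : ℕ → Set E) (hA : ∀ n, ¬ Bornology.IsBounded (A n)) :
    ∃ (a : ℕ → E) (χ : ℕ → (E →L[ℝ] ℝ)),
      (∀ n, a n ∈ A n) ∧ (∀ n, ‖χ n‖ = 1) ∧
      ∀ i n : ℕ, i ≤ n → 1 < |χ n (a i)| := by
  have hlarge (n : ℕ) : ∃ x ∈ A n, 2 * 4 ^ n < ‖x‖ := by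
    simpa using mt (isBounded_iff_forall_norm_le.2 ⟨2 * 4 ^ n, ·⟩) (hA n)
  choose x hxA hx using hlarge
  choose ψ hψ hψx using fun n => exists_dual_vector'' ℝ (x n)
  set g := greedySignedSum ψ x (fun j => 4⁻¹ ^ j)
  have key {i n : ℕ} (hin : i ≤ n) : ‖g (n + 1)‖ < |g (n + 1) (x i)| :=
    norm_lt_abs_greedySignedSum_apply hψ hψx hx (Nat.lt_succ_of_le hin)
  refine ⟨x, fun n => ‖g (n + 1)‖⁻¹ • g (n + 1), hxA, fun n => ?_, fun i n hin =>
    one_lt_abs_inv_norm_smul_apply (key hin)⟩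
  refine norm_smul_inv_norm fun h0 => ?_
  simpa [h0] using key (le_refl n)
end

section
/- If E is an infinite-dimensional normed space, then E endowed with the weak topology does not have the Pytkeev property. -/
open Filter Topology Set

/-- `X` has the Pytkeev property. -/
def PytkeevSpace (X : Type*) [TopologicalSpace X] : Prop :=
  ∀ (A : Set X) (x : X), x ∈ closure A \ A →
    ∃ S : ℕ → Set X, (∀ n, S n ⊆ A ∧ (S n).Infinite) ∧
      ∀ U ∈ nhds x, ∃ n, S n ⊆ U

/-!
Since `E` is infinite-dimensional, finite nets in the spheres of radius `n + 1` of subspaces of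
dimension `n + 1` give a set `A ⊆ E` with `0 ∉ A`, only finitely many points in each ball, and `0`
in its weak closure: any `n` functionals have a common zero on such a sphere, and a nearby net
point is almost annihilated by them. Pytkeev sets `Sₙ ⊆ A` for `0` would be infinite, hence
norm-unbounded, so their polars are closed subsets of the Banach space `StrongDual ℝ E` with empty
interior. By Baire some `f` lies outside all of them, and the weak neighbourhood
`{x | ‖f x‖ ≤ 1}` of `0` then contains no `Sₙ`.
-/

open Bornology Metric Module

section WeakTopology

variable {𝕜 E : Type*} [NormedField 𝕜] [AddCommGroup E] [TopologicalSpace E] [Module 𝕜 E]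

theorem zero_mem_closure_toWeakSpace_image {s : Set E}
    (h : ∀ (I : Finset (StrongDual 𝕜 E)) (ε : ℝ), 0 < ε → ∃ x ∈ s, ∀ f ∈ I, ‖f x‖ < ε) :
    (0 : WeakSpace 𝕜 E) ∈ closure (toWeakSpace 𝕜 E '' s) := by
  refine mem_closure_iff_nhds.mpr fun U hU => ?_
  obtain ⟨I, ε, hε, hIU⟩ :=
    ((topDualPairing 𝕜 E).flip.weakBilin_withSeminorms.mem_nhds_iff 0 U).mp hU
  obtain ⟨x, hxs, hx⟩ := h I ε hε
  exact ⟨toWeakSpace 𝕜 E x,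
    hIU ((Seminorm.mem_ball_zero _).mpr (Seminorm.finset_sup_apply_lt hε hx)), x, hxs, rfl⟩

theorem setOf_norm_le_one_mem_nhds_zero (f : StrongDual 𝕜 E) :
    {x : WeakSpace 𝕜 E | ‖f ((toWeakSpace 𝕜 E).symm x)‖ ≤ 1} ∈ 𝓝 0 := by
  have hf : Continuous fun x : WeakSpace 𝕜 E => ‖f ((toWeakSpace 𝕜 E).symm x)‖ :=
    (WeakBilin.eval_continuous _ f).norm
  exact hf.continuousAt.preimage_mem_nhds (Iic_mem_nhds (by simp))

end WeakTopology

theorem Submodule.exists_finiteDimensional_finrank_eq {K V : Type*} [DivisionRing K]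
    [AddCommGroup V] [Module K V] (h : ¬FiniteDimensional K V) (n : ℕ) :
    ∃ W : Submodule K V, FiniteDimensional K W ∧ finrank K W = n := by
  have hrank : (n : Cardinal) ≤ Module.rank K V :=
    Cardinal.natCast_lt_aleph0.le.trans
      (not_lt.mp fun hlt => h (Module.rank_lt_aleph0_iff.mp hlt))
  obtain ⟨v, hv⟩ := exists_linearIndependent_of_le_rank hrank
  exact ⟨Submodule.span K (range v), FiniteDimensional.span_of_finite K (finite_range v),
    by rw [finrank_span_eq_card hv, Fintype.card_fin]⟩

section NormedSpace

variable {𝕜 E : Type*} [RCLike 𝕜] [NormedAddCommGroup E] [NormedSpace 𝕜 E]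

theorem exists_isCompact_subset_sphere_forall_exists_eq_zero (h : ¬FiniteDimensional 𝕜 E)
    (n : ℕ) {r : ℝ} (hr : 0 ≤ r) :
    ∃ K ⊆ sphere (0 : E) r, IsCompact K ∧
      ∀ I : Finset (StrongDual 𝕜 E), I.card ≤ n → ∃ x ∈ K, ∀ f ∈ I, f x = 0 := by
  obtain ⟨W, hW, hWn⟩ := Submodule.exists_finiteDimensional_finrank_eq h (n + 1)
  refine ⟨(↑) '' sphere (0 : W) r, by rintro _ ⟨x, hx, rfl⟩; simpa using hx,
    (isCompact_sphere 0 r).image continuous_subtype_val, fun I hI => ?_⟩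
  let evalI : W →ₗ[𝕜] I → 𝕜 := LinearMap.pi fun f => (f.1 : E →ₗ[𝕜] 𝕜).comp W.subtype
  have hker : Nontrivial (LinearMap.ker evalI) := Submodule.nontrivial_iff_ne_bot.mpr <|
    LinearMap.ker_ne_bot_of_finrank_lt <| by
      rw [Module.finrank_fintype_fun_eq_card, hWn, Fintype.card_coe]
      lia
  obtain ⟨⟨⟨x, hx⟩, hxr⟩⟩ := NormedSpace.sphere_nonempty_rclike 𝕜 (E := LinearMap.ker evalI) hr
  refine ⟨x, ⟨x, by simpa using hxr, rfl⟩, fun f hf => ?_⟩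
  simpa [evalI] using congrFun (LinearMap.mem_ker.mp hx) ⟨f, hf⟩

theorem exists_finite_subset_sphere_forall_exists_norm_le (h : ¬FiniteDimensional 𝕜 E)
    (n : ℕ) {r δ : ℝ} (hr : 0 ≤ r) (hδ : 0 < δ) :
    ∃ N ⊆ sphere (0 : E) r, N.Finite ∧
      ∀ I : Finset (StrongDual 𝕜 E), I.card ≤ n → ∃ u ∈ N, ∀ f ∈ I, ‖f u‖ ≤ ‖f‖ * δ := by
  obtain ⟨K, hKr, hK, hKI⟩ := exists_isCompact_subset_sphere_forall_exists_eq_zero h n hr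
  obtain ⟨N, hNK, hN, hKN⟩ := finite_cover_balls_of_compact hK hδ
  refine ⟨N, hNK.trans hKr, hN, fun I hI => ?_⟩
  obtain ⟨x, hxK, hx⟩ := hKI I hI
  obtain ⟨u, huN, hxu⟩ := mem_iUnion₂.mp (hKN hxK)
  refine ⟨u, huN, fun f hf => ?_⟩
  calc ‖f u‖ = ‖f (u - x)‖ := by rw [map_sub, hx f hf, sub_zero]
    _ ≤ ‖f‖ * ‖u - x‖ := f.le_opNorm _
    _ ≤ ‖f‖ * δ := by
        gcongr
        exact (mem_ball_iff_norm'.mp hxu).le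

theorem exists_zero_mem_closure_toWeakSpace_image (h : ¬FiniteDimensional 𝕜 E) :
    ∃ A : Set E, 0 ∉ A ∧ (∀ s ⊆ A, IsBounded s → s.Finite) ∧
      (0 : WeakSpace 𝕜 E) ∈ closure (toWeakSpace 𝕜 E '' A) := by
  choose N hNr hN hNI using fun n : ℕ =>
    exists_finite_subset_sphere_forall_exists_norm_le h n (r := n + 1) (δ := 1 / (n + 1))
      (by positivity) (by positivity)
  have hnorm : ∀ n, ∀ x ∈ N n, ‖x‖ = n + 1 := fun n x hx => by simpa using hNr n hx
  refine ⟨⋃ n, N n, fun h0 => ?_, fun s hsA hs => ?_,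
    zero_mem_closure_toWeakSpace_image fun I ε hε => ?_⟩
  · obtain ⟨n, hn⟩ := mem_iUnion.mp h0
    exact absurd (hnorm n 0 hn) (by rw [norm_zero]; exact (Nat.cast_add_one_pos n).ne)
  · obtain ⟨R, hR⟩ := hs.subset_closedBall 0
    obtain ⟨m, hm⟩ := exists_nat_gt R
    refine ((finite_lt_nat m).biUnion fun n _ => hN n).subset fun x hx => ?_
    obtain ⟨n, hn⟩ := mem_iUnion.mp (hsA hx)
    have : (n : ℝ) + 1 ≤ R := hnorm n x hn ▸ mem_closedBall_zero_iff.mp (hR hx)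
    exact mem_iUnion₂.mpr ⟨n, by exact_mod_cast (show (n : ℝ) < m by linarith), hn⟩
  · have hsmall : ∀ᶠ n : ℕ in atTop, (∑ f ∈ I, ‖f‖) * (1 / ((n : ℝ) + 1)) < ε := by
      have := (tendsto_one_div_add_atTop_nhds_zero_nat (𝕜 := ℝ)).const_mul (∑ f ∈ I, ‖f‖)
      rw [mul_zero] at this
      exact this.eventually (gt_mem_nhds hε)
    obtain ⟨n, hIn, hn⟩ := ((eventually_ge_atTop I.card).and hsmall).exists
    obtain ⟨u, huN, hu⟩ := hNI n I hIn
    refine ⟨u, mem_iUnion.mpr ⟨n, huN⟩, fun f hf => (hu f hf).trans_lt (lt_of_le_of_lt ?_ hn)⟩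
    gcongr
    exact Finset.single_le_sum (fun g _ => norm_nonneg g) hf

theorem isBounded_of_nonempty_interior_polar {s : Set E}
    (h : (interior (StrongDual.polar 𝕜 s)).Nonempty) : IsBounded s := by
  obtain ⟨g, hg⟩ := h
  obtain ⟨r, hr, hball⟩ := Metric.isOpen_iff.mp isOpen_interior g hg
  refine isBounded_iff_forall_norm_le.mpr ⟨4 / r, fun x hx => ?_⟩
  obtain ⟨φ, hφ, hφx⟩ := exists_dual_vector'' 𝕜 x
  set c : 𝕜 := ((r / 2 : ℝ) : 𝕜)
  have hgc : g + c • φ ∈ StrongDual.polar 𝕜 s := by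
    refine interior_subset (hball (mem_ball_iff_norm.mpr ?_))
    rw [add_sub_cancel_left, norm_smul, RCLike.norm_ofReal, abs_of_pos (half_pos hr)]
    nlinarith
  have hgx : ‖g x‖ ≤ 1 := interior_subset hg x hx
  have hgcx : ‖(g + c • φ) x‖ ≤ 1 := hgc x hx
  have : r / 2 * ‖x‖ ≤ 2 :=
    calc r / 2 * ‖x‖ = ‖(g + c • φ) x - g x‖ := by simp [c, hφx, norm_mul, abs_of_pos hr]
      _ ≤ 2 := (norm_sub_le _ _).trans (by linarith)
  rw [le_div_iff₀ hr]
  linarith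

theorem exists_strongDual_forall_notMem_polar {ι : Type*} [Countable ι] {S : ι → Set E}
    (hS : ∀ i, ¬IsBounded (S i)) : ∃ f : StrongDual 𝕜 E, ∀ i, f ∉ StrongDual.polar 𝕜 (S i) := by
  by_contra! hcover
  obtain ⟨i, hi⟩ := nonempty_interior_of_iUnion_of_closed
    (fun i => NormedSpace.isClosed_polar 𝕜 (S i)) (iUnion_eq_univ_iff.mpr hcover)
  exact hS i (isBounded_of_nonempty_interior_polar hi)

end NormedSpace

/-- Theorem 1.4: an infinite-dimensional normed space with the weak topology does not have
the Pytkeev property. -/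
theorem weak_not_pytkeev_of_infinite_dimensional
    {E : Type*} [NormedAddCommGroup E] [NormedSpace ℝ E]
    (h : ¬ FiniteDimensional ℝ E) :
    ¬ PytkeevSpace (WeakSpace ℝ E) := by
  intro hP
  obtain ⟨A, hA0, hA, hA_closure⟩ := exists_zero_mem_closure_toWeakSpace_image (𝕜 := ℝ) h
  obtain ⟨S, hS, hS_nhds⟩ := hP _ 0 ⟨hA_closure, by simpa using hA0⟩
  have hS_unbounded : ∀ n, ¬IsBounded (toWeakSpace ℝ E ⁻¹' S n) := fun n hb =>
    ((hS n).2.preimage fun y _ => (toWeakSpace ℝ E).surjective y).not_finite <| hA _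
      (fun x hx => (toWeakSpace ℝ E).injective.mem_set_image.mp ((hS n).1 hx)) hb
  obtain ⟨f, hf⟩ := exists_strongDual_forall_notMem_polar (𝕜 := ℝ) hS_unbounded
  obtain ⟨n, hn⟩ := hS_nhds _ (setOf_norm_le_one_mem_nhds_zero f)
  exact hf n fun x hx => hn hx
end

section
/- Let A be the set of all sequences a ∈ ℓ¹ such that there exist m ≠ n with a(m) = 1/2, a(n) = -1/2, and a(i) = 0 for all other i. Then 0 belongs to the closure of A in the weak topology of ℓ¹. -/
open Filter Topology Set

noncomputable section

/-- The Banach space `ℓ¹` of absolutely summable real sequences. -/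
abbrev ellOne : Type := lp (fun _ : ℕ => ℝ) 1

/-- The set of sequences in `ℓ¹` with exactly two nonzero entries, equal to `1/2` and `-1/2`. -/
def pairSet : Set ellOne :=
  {a : ellOne | ∃ m n : ℕ, m ≠ n ∧ a m = 1/2 ∧ a n = -1/2 ∧
    ∀ i : ℕ, i ≠ m → i ≠ n → a i = 0}

/-!
The sequence `e_k / 2` of halved unit vectors is bounded, and the weak topology of a normed
space `E` is induced by `x ↦ (L ↦ L x)` into the product `StrongDual 𝕜 E → 𝕜`. There a bounded
sequence lives in a product of compact balls, so by Tychonoff it has a cluster point `a`. If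
infinitely many terms lie in `a + V` with `V - V ⊆ U`, two distinct ones differ by an element of
`U`: hence `0` is in the closure of the differences `e_m / 2 - e_n / 2` (`m ≠ n`), which form
`pairSet`. The cluster point is needed because no sequence of such differences tends weakly to
`0`: `ℓ¹` has the Schur property.
-/

theorem zero_mem_closure_sub_of_mapClusterPt {G : Type*} [AddCommGroup G] [TopologicalSpace G]
    [IsTopologicalAddGroup G] {y : ℕ → G} {a : G} (h : MapClusterPt a atTop y) :
    (0 : G) ∈ closure {g | ∃ m n, m ≠ n ∧ y m - y n = g} := by
  rw [mem_closure_iff_nhds]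
  intro U hU
  obtain ⟨V, hV, hVU⟩ := exists_nhds_half_neg hU
  have hVa : (· - a) ⁻¹' V ∈ 𝓝 a :=
    (continuous_id.sub continuous_const).continuousAt.preimage_mem_nhds (by simpa using hV)
  have hfreq := frequently_atTop.mp (h.frequently hVa)
  obtain ⟨m, -, hm⟩ := hfreq 0
  obtain ⟨n, hmn, hn⟩ := hfreq (m + 1)
  refine ⟨y n - y m, ?_, n, m, by omega, rfl⟩
  simpa using hVU _ hn _ hm

theorem zero_mem_weak_closure_sub_of_norm_le {𝕜 E : Type*} [NontriviallyNormedField 𝕜]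
    [ProperSpace 𝕜] [SeminormedAddCommGroup E] [NormedSpace 𝕜 E] {x : ℕ → E} {C : ℝ}
    (hx : ∀ n, ‖x n‖ ≤ C) :
    (0 : WeakSpace 𝕜 E) ∈ closure (toWeakSpace 𝕜 E '' {v | ∃ m n, m ≠ n ∧ x m - x n = v}) := by
  let ev : WeakSpace 𝕜 E → (StrongDual 𝕜 E → 𝕜) := fun v L => L v
  have hev : Topology.IsInducing ev := ⟨rfl⟩
  rw [hev.closure_eq_preimage_closure_image, mem_preimage,
    show ev 0 = 0 from funext fun L => map_zero L]
  let y : ℕ → StrongDual 𝕜 E → 𝕜 := fun n L => L (x n)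
  have hy : ∀ n, y n ∈ univ.pi fun L => Metric.closedBall 0 (‖L‖ * C) := fun n L _ => by
    simpa using L.le_of_opNorm_le_of_le le_rfl (hx n)
  obtain ⟨a, -, ha⟩ := (isCompact_univ_pi fun L => isCompact_closedBall _ _).exists_mapClusterPt
    (f := atTop) (tendsto_principal.2 (.of_forall hy))
  refine closure_mono ?_ (zero_mem_closure_sub_of_mapClusterPt ha)
  rintro _ ⟨m, n, hmn, rfl⟩
  exact ⟨_, ⟨_, ⟨m, n, hmn, rfl⟩, rfl⟩, funext fun L => map_sub L (x m) (x n)⟩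

theorem single_sub_single_mem_pairSet {m n : ℕ} (hmn : m ≠ n) :
    lp.single 1 m (1/2 : ℝ) - lp.single 1 n (1/2) ∈ pairSet := by
  refine ⟨m, n, hmn, ?_, ?_, fun i him hin => ?_⟩ <;>
    norm_num [lp.single_apply, hmn.symm, *]

/-- `0` lies in the weak closure of the set `A` of two-point `±1/2` sequences in `ℓ¹`. -/
theorem zero_mem_weak_closure_pairSet :
    (0 : WeakSpace ℝ ellOne) ∈
      closure ((toWeakSpace ℝ ellOne) '' pairSet) := by
  have hbound : ∀ k, ‖lp.single (E := fun _ : ℕ => ℝ) 1 k (1/2 : ℝ)‖ ≤ 1/2 := fun k => by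
    rw [lp.norm_single (by norm_num)]
    norm_num
  refine closure_mono (image_mono ?_) (zero_mem_weak_closure_sub_of_norm_le hbound)
  rintro _ ⟨m, n, hmn, rfl⟩
  exact single_sub_single_mem_pairSet hmn
end
end

section
/- Let A ⊆ ℓ¹ be the set of sequences with exactly two nonzero entries equal to 1/2 and -1/2 respectively, and let A₁, A₂, … be arbitrary infinite subsets of A. Then there exists χ ∈ ℓ^∞ with ‖χ‖_∞ ≤ 1 such that for every s ∈ ℕ, the set Aₛ is not contained in {x ∈ ℓ¹ : |⟨χ, x⟩| < 1/2}. -/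
open Filter Topology Set

noncomputable section

/-- The Banach space `ℓ^∞` of bounded real sequences. -/
abbrev ellInfty : Type := lp (fun _ : ℕ => ℝ) ⊤

namespace PytkeevAux

attribute [local instance] Classical.propDecidable

/-- The index where a pair-sequence takes value `1/2` (via choice). -/
noncomputable def mIdx (x : ellOne) : ℕ :=
  if h : x ∈ pairSet then h.choose else 0

/-- The index where a pair-sequence takes value `-1/2` (via choice). -/
noncomputable def nIdx (x : ellOne) : ℕ :=
  if h : x ∈ pairSet then h.choose_spec.choose else 0

lemma idx_spec {x : ellOne} (h : x ∈ pairSet) :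
    mIdx x ≠ nIdx x ∧ x (mIdx x) = 1/2 ∧ x (nIdx x) = -1/2 ∧
      ∀ i : ℕ, i ≠ mIdx x → i ≠ nIdx x → x i = 0 := by
  rw [mIdx, nIdx]
  simp only [dif_pos h]
  exact h.choose_spec.choose_spec

lemma pair_eq {x y : ellOne} (hx : x ∈ pairSet) (hy : y ∈ pairSet)
    (hm : mIdx x = mIdx y) (hn : nIdx x = nIdx y) : x = y := by
  obtain ⟨hne, hxm, hxn, hx0⟩ := idx_spec hx
  obtain ⟨hne', hym, hyn, hy0⟩ := idx_spec hy
  apply lp.ext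
  funext i
  by_cases h1 : i = mIdx x
  · subst h1; rw [hxm, hm, hym]
  · by_cases h2 : i = nIdx x
    · subst h2; rw [hxn, hn, hyn]
    · rw [hx0 i h1 h2, hy0 i (hm ▸ h1) (hn ▸ h2)]

lemma exists_good {T : Set ellOne} (hT1 : T ⊆ pairSet) (hT2 : T.Infinite) (b : ℕ) :
    ∃ x ∈ T, b < max (mIdx x) (nIdx x) := by
  by_contra hcon
  push_neg at hcon
  apply hT2
  have hfin : Set.Finite ((Set.Iic b) ×ˢ (Set.Iic b) : Set (ℕ × ℕ)) :=
    (Set.finite_Iic b).prod (Set.finite_Iic b)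
  apply Set.Finite.of_finite_image (f := fun x => (mIdx x, nIdx x))
  · apply hfin.subset
    rintro ⟨p, q⟩ ⟨x, hx, hxe⟩
    have hb := hcon x hx
    simp only [Prod.mk.injEq] at hxe
    refine ⟨?_, ?_⟩
    · simp only [Set.mem_Iic, ← hxe.1]
      exact le_trans (le_max_left _ _) hb
    · simp only [Set.mem_Iic, ← hxe.2]
      exact le_trans (le_max_right _ _) hb
  · intro x hx y hy hxy
    simp only [Prod.mk.injEq] at hxy
    exact pair_eq (hT1 hx) (hT1 hy) hxy.1 hxy.2

variable (S : ℕ → Set ellOne) (hS : ∀ s, S s ⊆ pairSet ∧ (S s).Infinite)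

/-- Recursively chosen elements `aₛ ∈ Sₛ` whose maximal support index strictly increases. -/
noncomputable def chain : ℕ → ellOne
  | 0 => (exists_good (hS 0).1 (hS 0).2 0).choose
  | s+1 => (exists_good (hS (s+1)).1 (hS (s+1)).2
      (max (mIdx (chain s)) (nIdx (chain s)))).choose

lemma chain_mem (s : ℕ) : chain S hS s ∈ S s := by
  cases s with
  | zero =>
    rw [chain]
    exact (exists_good (hS 0).1 (hS 0).2 0).choose_spec.1
  | succ n =>
    rw [chain]
    exact (exists_good (hS (n+1)).1 (hS (n+1)).2 _).choose_spec.1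

lemma chain_lt (s : ℕ) :
    max (mIdx (chain S hS s)) (nIdx (chain S hS s)) <
      max (mIdx (chain S hS (s+1))) (nIdx (chain S hS (s+1))) := by
  conv_rhs => rw [chain]
  exact (exists_good (hS (s+1)).1 (hS (s+1)).2 _).choose_spec.2

/-- The `±1` sequence defined by well-founded recursion: at an index of the form `f s` it takes
the value opposite to the one at `o s`; elsewhere it is `1`. -/
noncomputable def chiFun (f o : ℕ → ℕ) (hfo : ∀ s, o s < f s) : ℕ → ℝ :=
  WellFounded.fix (Nat.lt_wfRel.wf) (fun i ih =>
    if h : ∃ s, f s = i then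
      -(ih (o h.choose) (lt_of_lt_of_eq (hfo h.choose) h.choose_spec))
    else 1)

lemma chiFun_eq (f o : ℕ → ℕ) (hfo : ∀ s, o s < f s) (i : ℕ) :
    chiFun f o hfo i =
      if h : ∃ s, f s = i then -(chiFun f o hfo (o h.choose)) else 1 := by
  rw [chiFun, WellFounded.fix_eq]

lemma chiFun_pm (f o : ℕ → ℕ) (hfo : ∀ s, o s < f s) :
    ∀ i, chiFun f o hfo i = 1 ∨ chiFun f o hfo i = -1 := by
  intro i
  induction i using Nat.strong_induction_on with
  | _ i ih =>
    rw [chiFun_eq]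
    split_ifs with h
    · rcases ih (o h.choose) (lt_of_lt_of_eq (hfo h.choose) h.choose_spec) with h1 | h1 <;>
        simp [h1]
    · left; rfl

lemma chiFun_f (f o : ℕ → ℕ) (hfo : ∀ s, o s < f s) (hinj : Function.Injective f) (s : ℕ) :
    chiFun f o hfo (f s) = -(chiFun f o hfo (o s)) := by
  rw [chiFun_eq]
  have h : ∃ t, f t = f s := ⟨s, rfl⟩
  rw [dif_pos h]
  have hcs : h.choose = s := hinj h.choose_spec
  rw [hcs]

end PytkeevAux

/-- For any sequence `A₁, A₂, …` of infinite subsets of the set `A` of two-point `±1/2`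
sequences in `ℓ¹`, there is `χ ∈ ℓ^∞` with `‖χ‖ ≤ 1` such that no `Aₛ` is contained in
`{x : ℓ¹ | |⟨χ, x⟩| < 1/2}`. -/
theorem exists_linfty_functional_not_absorbing
    (S : ℕ → Set ellOne) (hS : ∀ s, S s ⊆ pairSet ∧ (S s).Infinite) :
    ∃ χ : ellInfty, ‖χ‖ ≤ 1 ∧
      ∀ s : ℕ, ¬ (S s ⊆ {x : ellOne | |∑' i : ℕ, χ i * x i| < 1/2}) := by
  classical
  open PytkeevAux in
  set f : ℕ → ℕ := fun s => max (mIdx (chain S hS s)) (nIdx (chain S hS s)) with hf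
  set o : ℕ → ℕ := fun s => min (mIdx (chain S hS s)) (nIdx (chain S hS s)) with ho
  have hmemP : ∀ s, chain S hS s ∈ pairSet := fun s => (hS s).1 (chain_mem S hS s)
  have hfo : ∀ s, o s < f s := fun s => min_lt_max.mpr (idx_spec (hmemP s)).1
  have hmono : StrictMono f := strictMono_nat_of_lt_succ (chain_lt S hS)
  set χf : ℕ → ℝ := chiFun f o hfo with hχf
  have hpm := chiFun_pm f o hfo
  have hnorm1 : ∀ i, ‖χf i‖ ≤ 1 := by
    intro i; rcases hpm i with h | h <;> simp only [hχf, h] <;> norm_num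
  have hmemInf : Memℓp χf ⊤ := memℓp_infty ⟨1, by rintro r ⟨i, rfl⟩; exact hnorm1 i⟩
  refine ⟨⟨χf, hmemInf⟩, ?_, ?_⟩
  · exact lp.norm_le_of_forall_le zero_le_one hnorm1
  · intro s hsub
    set x : ellOne := chain S hS s with hx
    obtain ⟨hne, hm, hn, h0⟩ := idx_spec (hmemP s)
    have hlt := hsub (chain_mem S hS s)
    simp only [Set.mem_setOf_eq] at hlt
    have hcoe : ∀ i, ((⟨χf, hmemInf⟩ : ellInfty) : ∀ _ : ℕ, ℝ) i = χf i := fun i => rfl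
    have hts : (∑' i : ℕ, (⟨χf, hmemInf⟩ : ellInfty) i * x i)
        = χf (mIdx x) * (1/2) + χf (nIdx x) * (-1/2) := by
      rw [tsum_eq_sum (s := {mIdx x, nIdx x}) ?_]
      · rw [Finset.sum_pair hne, hcoe, hcoe, hm, hn]
      · intro i hi
        simp only [Finset.mem_insert, Finset.mem_singleton, not_or] at hi
        rw [h0 i hi.1 hi.2, mul_zero]
    rw [hts] at hlt
    have hchi : χf (f s) = -(χf (o s)) := chiFun_f f o hfo hmono.injective s
    -- identify f s and o s with mIdx x, nIdx x
    rcases lt_or_gt_of_ne hne with hcase | hcase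
    · -- mIdx x < nIdx x : f s = nIdx x, o s = mIdx x
      have hfs : f s = nIdx x := by
        simp only [hf]; exact max_eq_right hcase.le
      have hos : o s = mIdx x := by
        simp only [ho]; exact min_eq_left hcase.le
      rw [hfs, hos] at hchi
      rw [hchi] at hlt
      rcases hpm (mIdx x) with h1 | h1 <;> simp only [hχf, h1] at hlt <;> norm_num at hlt
    · -- nIdx x < mIdx x : f s = mIdx x, o s = nIdx x
      have hfs : f s = mIdx x := by
        simp only [hf]; exact max_eq_left hcase.le
      have hos : o s = nIdx x := by
        simp only [ho]; exact min_eq_right hcase.le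
      rw [hfs, hos] at hchi
      rw [hchi] at hlt
      rcases hpm (nIdx x) with h1 | h1 <;> simp only [hχf, h1] at hlt <;> norm_num at hlt
end
end

section
/- Let a regular topological space X be covered by an increasing sequence (Aₙ)ₙ∈ℕ of closed subsets, each of which is an ℵ₀-space (in the subspace topology), and suppose every compact subset of X is contained in some Aₙ. Then X is an ℵ₀-space. -/
open Filter Topology Set

/-- `N` is a k-network for `X`: for every compact `K` contained in an open `U` there is a
finite subfamily `F ⊆ N` with `K ⊆ ⋃₀ F ⊆ U`. -/
def IsKNetwork (X : Type*) [TopologicalSpace X] (N : Set (Set X)) : Prop :=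
  ∀ U K : Set X, IsOpen U → IsCompact K → K ⊆ U →
    ∃ F : Set (Set X), F ⊆ N ∧ F.Finite ∧ K ⊆ ⋃₀ F ∧ ⋃₀ F ⊆ U

/-- `X` is an `ℵ₀`-space: a regular space with a countable k-network. -/
def AlephZeroSpace (X : Type*) [TopologicalSpace X] : Prop :=
  RegularSpace X ∧ ∃ N : Set (Set X), N.Countable ∧ IsKNetwork X N

/-
A compact set of `X` lies in some `Aₙ`, where the countable k-network of `Aₙ` covers it by finitely
many members inside any given open neighbourhood. Hence the union over `n` of the k-networks of
the `Aₙ`, transported to `X`, is a countable k-network of `X`.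
-/

theorem IsKNetwork.exists_finite_image_subfamily {X Y : Type*} [TopologicalSpace X]
    [TopologicalSpace Y] {f : Y → X} (hf : IsInducing f)
    {N : Set (Set Y)} (hN : IsKNetwork Y N) {U K : Set X} (hU : IsOpen U) (hK : IsCompact K)
    (hKf : K ⊆ range f) (hKU : K ⊆ U) :
    ∃ F ⊆ image f '' N, F.Finite ∧ K ⊆ ⋃₀ F ∧ ⋃₀ F ⊆ U := by
  obtain ⟨F, hFN, hFfin, hKF, hFU⟩ := hN (f ⁻¹' U) (f ⁻¹' K)
    (hU.preimage hf.continuous) (hf.isCompact_preimage' hK hKf) (preimage_mono hKU)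
  refine ⟨image f '' F, image_mono hFN, hFfin.image _, ?_, ?_⟩
  · calc K = f '' (f ⁻¹' K) := (image_preimage_eq_of_subset hKf).symm
      _ ⊆ f '' ⋃₀ F := image_mono hKF
      _ = ⋃₀ (image f '' F) := image_sUnion
  · rw [← image_sUnion]
    exact image_subset_iff.mpr hFU

theorem isKNetwork_iUnion_image {X : Type*} [TopologicalSpace X] {ι : Type*} {Y : ι → Type*}
    [∀ i, TopologicalSpace (Y i)] {f : ∀ i, Y i → X} (hf : ∀ i, IsInducing (f i))
    {N : ∀ i, Set (Set (Y i))} (hN : ∀ i, IsKNetwork (Y i) (N i))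
    (hcompact : ∀ K : Set X, IsCompact K → ∃ i, K ⊆ range (f i)) :
    IsKNetwork X (⋃ i, image (f i) '' N i) := by
  intro U K hU hK hKU
  obtain ⟨i, hKi⟩ := hcompact K hK
  obtain ⟨F, hFN, hF⟩ := (hN i).exists_finite_image_subfamily (hf i) hU hK hKi hKU
  exact ⟨F, hFN.trans (subset_iUnion_of_subset i subset_rfl), hF⟩

theorem alephZero_of_increasing_closed_cover_general
    {X : Type*} [TopologicalSpace X] [RegularSpace X]
    (A : ℕ → Set X)
    (haleph : ∀ n, AlephZeroSpace (A n))
    (hcompact : ∀ K : Set X, IsCompact K → ∃ n, K ⊆ A n) :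
    AlephZeroSpace X := by
  choose N hNcount hNk using fun n => (haleph n).2
  refine ⟨inferInstance, ⋃ n, image ((↑) : A n → X) '' N n,
    countable_iUnion fun n => (hNcount n).image _, ?_⟩
  refine isKNetwork_iUnion_image (fun n => IsInducing.subtypeVal) hNk fun K hK => ?_
  simpa only [Subtype.range_coe] using hcompact K hK

/-- Proposition 4.1(i): a regular space covered by an increasing sequence of closed
`ℵ₀`-subspaces, such that every compact set lies in some member of the sequence, is an
`ℵ₀`-space. -/
theorem alephZero_of_increasing_closed_cover
    {X : Type*} [TopologicalSpace X] [RegularSpace X]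
    (A : ℕ → Set X) (hmono : Monotone A) (hclosed : ∀ n, IsClosed (A n))
    (hcover : (⋃ n, A n) = univ)
    (haleph : ∀ n, AlephZeroSpace (A n))
    (hcompact : ∀ K : Set X, IsCompact K → ∃ n, K ⊆ A n) :
    AlephZeroSpace X :=
  alephZero_of_increasing_closed_cover_general A haleph hcompact
end

section
/- Let a topological space X be covered by an increasing sequence (Aₙ)ₙ∈ℕ of closed subsets, each of countable cs*-character, such that every convergent sequence in X (together with its limit) is contained in some Aₙ. Then X has countable cs*-character. -/
open Filter Topology Set

/-- `X` has countable cs*-character at `x`: there is a countable family `D` of subsets of `X`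
such that for every sequence converging to `x` and every neighborhood `U` of `x`, some member
of `D` is contained in `U` and contains infinitely many terms of the sequence. -/
def CountableCsStarCharacterAt (X : Type*) [TopologicalSpace X] (x : X) : Prop :=
  ∃ D : Set (Set X), D.Countable ∧
    ∀ u : ℕ → X, Tendsto u atTop (nhds x) →
      ∀ U ∈ nhds x, ∃ D₀ ∈ D, D₀ ⊆ U ∧ {n : ℕ | u n ∈ D₀}.Infinite

/-- `X` has countable cs*-character. -/
def CountableCsStarCharacter (X : Type*) [TopologicalSpace X] : Prop :=
  ∀ x : X, CountableCsStarCharacterAt X x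

/-- Proposition 4.1(ii): a space covered by an increasing sequence of closed subsets of
countable cs*-character, such that every convergent sequence together with its limit lies in
some member of the sequence, has countable cs*-character. -/
theorem csStar_of_increasing_closed_cover
    {X : Type*} [TopologicalSpace X]
    (A : ℕ → Set X) (hmono : Monotone A) (hclosed : ∀ n, IsClosed (A n))
    (hcover : (⋃ n, A n) = univ)
    (hcs : ∀ n, CountableCsStarCharacter (A n))
    (hseq : ∀ (u : ℕ → X) (x : X), Tendsto u atTop (nhds x) →
      ∃ n, (∀ k, u k ∈ A n) ∧ x ∈ A n) :
    CountableCsStarCharacter X := by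
  intro x
  classical
  have key : ∀ n : ℕ, ∃ D : Set (Set X), D.Countable ∧
      (x ∈ A n → ∀ u : ℕ → X, (∀ k, u k ∈ A n) → Tendsto u atTop (nhds x) →
        ∀ U ∈ nhds x, ∃ D₀ ∈ D, D₀ ⊆ U ∧ {k : ℕ | u k ∈ D₀}.Infinite) := by
    intro n
    by_cases hx : x ∈ A n
    · obtain ⟨D, hDc, hD⟩ := hcs n ⟨x, hx⟩
      refine ⟨(fun s => Subtype.val '' s) '' D, hDc.image _, fun _ u hu hlim U hU => ?_⟩
      set v : ℕ → A n := fun k => ⟨u k, hu k⟩ with hv_def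
      have hv : Tendsto v atTop (nhds (⟨x, hx⟩ : A n)) := by
        rw [nhds_subtype, tendsto_comap_iff]
        exact hlim
      have hU' : (Subtype.val ⁻¹' U : Set (A n)) ∈ nhds (⟨x, hx⟩ : A n) :=
        (continuous_subtype_val.continuousAt).preimage_mem_nhds hU
      obtain ⟨D₀, hD₀D, hD₀U, hinf⟩ := hD v hv _ hU'
      refine ⟨Subtype.val '' D₀, ⟨D₀, hD₀D, rfl⟩, ?_, ?_⟩
      · rintro _ ⟨y, hy, rfl⟩
        exact hD₀U hy
      · refine hinf.mono ?_
        intro k hk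
        exact ⟨v k, hk, rfl⟩
    · exact ⟨∅, countable_empty, fun h => absurd h hx⟩
  choose D hDc hD using key
  refine ⟨⋃ n, D n, countable_iUnion hDc, fun u hu U hU => ?_⟩
  obtain ⟨n, hun, hxn⟩ := hseq u x hu
  obtain ⟨D₀, hD₀, hsub, hinf⟩ := hD n hxn u hun hu U hU
  exact ⟨D₀, mem_iUnion.2 ⟨n, hD₀⟩, hsub, hinf⟩
end

section
/- Let E be a topological vector space and A ⊆ E a closed subset such that every compact subset of E is contained in nA for some n ∈ ℕ. Then E is an ℵ₀-space if and only if A (with the subspace topology) is an ℵ₀-space. -/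
open Filter Topology Set Pointwise

/-!
A k-network of `E` pulls back to one of the subspace `A`, and regularity passes to subspaces.
Conversely, each `nA` is a copy of `A` for `n ≠ 0` and has at most one point for `n = 0`, so it
carries a countable k-network; since every compact subset of `E` lies in one of the countably
many sets `nA`, the union of these k-networks is a countable k-network of `E`, and a topological
vector space is always regular.
-/

def HasCountableKNetwork (X : Type*) [TopologicalSpace X] : Prop :=
  ∃ N : Set (Set X), N.Countable ∧ IsKNetwork X N

section

variable {X Y : Type*} [TopologicalSpace X] [TopologicalSpace Y]

theorem IsKNetwork.preimage {N : Set (Set Y)} (hN : IsKNetwork Y N) {f : X → Y}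
    (hf : IsInducing f) : IsKNetwork X (Set.preimage f '' N) := by
  intro U K hU hK hKU
  obtain ⟨V, hV, rfl⟩ := hf.isOpen_iff.mp hU
  obtain ⟨F, hFN, hF, hKF, hFV⟩ :=
    hN V (f '' K) hV (hK.image hf.continuous) (image_subset_iff.mpr hKU)
  refine ⟨Set.preimage f '' F, image_mono hFN, hF.image _, ?_, ?_⟩
  · intro x hx
    obtain ⟨s, hs, hxs⟩ := hKF (mem_image_of_mem f hx)
    exact ⟨f ⁻¹' s, mem_image_of_mem _ hs, hxs⟩
  · rintro x ⟨-, ⟨s, hs, rfl⟩, hxs⟩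
    exact hFV ⟨s, hs, hxs⟩

theorem isKNetwork_range_singleton [Finite X] : IsKNetwork X (range (singleton : X → Set X)) := by
  intro U K _ _ hKU
  have hK : ⋃₀ (singleton '' K) = K := by rw [sUnion_image, biUnion_of_singleton]
  exact ⟨singleton '' K, image_subset_range _ _, K.toFinite.image _, hK.superset,
    hK.subset.trans hKU⟩

theorem IsKNetwork.iUnion_image_val {ι : Type*} {S : ι → Set Y} {N : ∀ i, Set (Set (S i))}
    (hN : ∀ i, IsKNetwork (S i) (N i)) (hcov : ∀ K : Set Y, IsCompact K → ∃ i, K ⊆ S i) :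
    IsKNetwork Y (⋃ i, image (↑) '' N i) := by
  intro U K hU hK hKU
  obtain ⟨i, hKS⟩ := hcov K hK
  have hK' : IsCompact ((↑) ⁻¹' K : Set (S i)) := by
    rwa [IsInducing.subtypeVal.isCompact_iff, image_preimage_eq_of_subset (by simpa using hKS)]
  obtain ⟨F, hFN, hF, hKF, hFU⟩ :=
    hN i _ _ (hU.preimage continuous_subtype_val) hK' (preimage_mono hKU)
  refine ⟨image (↑) '' F, (image_mono hFN).trans (subset_iUnion_of_subset i subset_rfl),
    hF.image _, ?_, ?_⟩
  · intro x hx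
    obtain ⟨s, hs, hxs⟩ := hKF (show (⟨x, hKS hx⟩ : S i) ∈ (↑) ⁻¹' K from hx)
    exact ⟨(↑) '' s, mem_image_of_mem _ hs, mem_image_of_mem _ hxs⟩
  · rintro - ⟨-, ⟨s, hs, rfl⟩, ⟨x, hxs, rfl⟩⟩
    exact hFU ⟨s, hs, hxs⟩

namespace HasCountableKNetwork

theorem of_isInducing (h : HasCountableKNetwork Y) {f : X → Y} (hf : IsInducing f) :
    HasCountableKNetwork X :=
  let ⟨_, hNc, hN⟩ := h
  ⟨_, hNc.image _, hN.preimage hf⟩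

theorem of_finite [Finite X] : HasCountableKNetwork X :=
  ⟨_, countable_range _, isKNetwork_range_singleton⟩

theorem of_forall_isCompact_subset {ι : Type*} [Countable ι] {S : ι → Set Y}
    (hS : ∀ i, HasCountableKNetwork (S i)) (hcov : ∀ K : Set Y, IsCompact K → ∃ i, K ⊆ S i) :
    HasCountableKNetwork Y := by
  choose N hNc hN using hS
  exact ⟨_, countable_iUnion fun i => (hNc i).image _, IsKNetwork.iUnion_image_val hN hcov⟩

theorem smul_set {G : Type*} [GroupWithZero G] [MulAction G X] [ContinuousConstSMul G X]
    {s : Set X} (h : HasCountableKNetwork s) {c : G} (hc : c ≠ 0) :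
    HasCountableKNetwork ↥(c • s) :=
  let e := (Homeomorph.smulOfNeZero c hc).image s
  h.of_isInducing ((Homeomorph.setCongr image_smul).symm.trans e.symm).isInducing

theorem natCast_smul_set {E : Type*} [AddCommGroup E] [Module ℝ E] [TopologicalSpace E]
    [ContinuousConstSMul ℝ E] {s : Set E} (h : HasCountableKNetwork s) (n : ℕ) :
    HasCountableKNetwork ↥((n : ℝ) • s) := by
  rcases eq_or_ne n 0 with rfl | hn
  · rw [Nat.cast_zero]
    have : Finite ↥((0 : ℝ) • s) := ((finite_singleton 0).subset (zero_smul_set_subset s)).to_subtype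
    exact of_finite
  · exact h.smul_set (Nat.cast_ne_zero.mpr hn : (n : ℝ) ≠ 0)

end HasCountableKNetwork

end

theorem alephZero_iff_of_absorbing_closed_general
    {E : Type*} [AddCommGroup E] [Module ℝ E] [TopologicalSpace E]
    [IsTopologicalAddGroup E] [ContinuousSMul ℝ E]
    (A : Set E)
    (habs : ∀ K : Set E, IsCompact K → ∃ n : ℕ, K ⊆ (n : ℝ) • A) :
    AlephZeroSpace E ↔ AlephZeroSpace A := by
  constructor
  · rintro ⟨_, hE⟩
    exact ⟨inferInstance, HasCountableKNetwork.of_isInducing hE IsInducing.subtypeVal⟩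
  · rintro ⟨-, hA⟩
    exact ⟨inferInstance, HasCountableKNetwork.of_forall_isCompact_subset
      (fun n => HasCountableKNetwork.natCast_smul_set hA n) habs⟩

/-- Corollary 4.2(i): if `A` is a closed subset of a topological vector space `E` such that
every compact subset of `E` is contained in `nA` for some `n`, then `E` is an `ℵ₀`-space iff
`A` is. -/
theorem alephZero_iff_of_absorbing_closed
    {E : Type*} [AddCommGroup E] [Module ℝ E] [TopologicalSpace E]
    [IsTopologicalAddGroup E] [ContinuousSMul ℝ E]
    (A : Set E) (hA : IsClosed A)
    (habs : ∀ K : Set E, IsCompact K → ∃ n : ℕ, K ⊆ (n : ℝ) • A) :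
    AlephZeroSpace E ↔ AlephZeroSpace A :=
  alephZero_iff_of_absorbing_closed_general A habs
end

section
/- Let E be a Banach space and B its closed unit ball. Then E with the weak topology has countable cs*-character if and only if B with the weak topology has countable cs*-character. -/
open Filter Topology Set

/-!
A weakly convergent sequence in a Banach space is norm bounded, by the uniform boundedness
principle, so it lies entirely in some ball of radius `k + 1`; scaling makes each such ball weakly
homeomorphic to the unit ball `B`. Hence the countable cs*-networks of `B` at `0`, scaled by all
`k + 1`, together form a countable cs*-network of `E` at `0`, and translations carry it to every
point. Conversely, countable cs*-character passes to subspaces.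
-/

namespace CountableCsStarCharacterAt

variable {X Y : Type*} [TopologicalSpace X] [TopologicalSpace Y]

theorem of_isInducing {f : Y → X} (hf : IsInducing f) {y : Y}
    (h : CountableCsStarCharacterAt X (f y)) : CountableCsStarCharacterAt Y y := by
  obtain ⟨D, hD, hDu⟩ := h
  refine ⟨preimage f '' D, hD.image _, fun u hu U hU => ?_⟩
  rw [hf.nhds_eq_comap, mem_comap] at hU
  obtain ⟨V, hV, hVU⟩ := hU
  obtain ⟨D₀, hD₀, hD₀V, hinf⟩ := hDu (f ∘ u) ((hf.continuous.tendsto y).comp hu) V hV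
  exact ⟨f ⁻¹' D₀, mem_image_of_mem _ hD₀, (preimage_mono hD₀V).trans hVU, hinf⟩

theorem of_countable_cover {ι : Type*} [Countable ι] {p : ι → X → Prop} {x : X}
    (hx : ∀ i, p i x) (hp : ∀ u : ℕ → X, Tendsto u atTop (𝓝 x) → ∃ i, ∀ n, p i (u n))
    (h : ∀ i, CountableCsStarCharacterAt {y // p i y} ⟨x, hx i⟩) :
    CountableCsStarCharacterAt X x := by
  choose D hD hDu using h
  refine ⟨⋃ i, image Subtype.val '' D i, countable_iUnion fun i => (hD i).image _,
    fun u hu U hU => ?_⟩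
  obtain ⟨i, hi⟩ := hp u hu
  have hv : Tendsto (fun n => (⟨u n, hi n⟩ : {y // p i y})) atTop (𝓝 ⟨x, hx i⟩) :=
    tendsto_subtype_rng.2 hu
  obtain ⟨D₀, hD₀, hD₀U, hinf⟩ :=
    hDu i _ hv _ (continuous_subtype_val.continuousAt.preimage_mem_nhds hU)
  refine ⟨Subtype.val '' D₀, mem_iUnion.2 ⟨i, mem_image_of_mem _ hD₀⟩,
    image_subset_iff.2 hD₀U, hinf.mono fun n hn => ⟨_, hn, rfl⟩⟩

end CountableCsStarCharacterAt

namespace WeakSpace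

variable {𝕜 E : Type*} [RCLike 𝕜] [NormedAddCommGroup E] [NormedSpace 𝕜 E]

/-- Uniform boundedness principle, applied to `E` inside its bidual. -/
theorem exists_norm_le_of_tendsto [CompleteSpace E] {u : ℕ → WeakSpace 𝕜 E}
    {x : WeakSpace 𝕜 E} (hu : Tendsto u atTop (𝓝 x)) :
    ∃ M, ∀ n, ‖(toWeakSpace 𝕜 E).symm (u n)‖ ≤ M := by
  have hbdd : ∀ f : StrongDual 𝕜 E, ∃ C, ∀ n,
      ‖NormedSpace.inclusionInDoubleDual 𝕜 E ((toWeakSpace 𝕜 E).symm (u n)) f‖ ≤ C := by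
    intro f
    obtain ⟨C, hC⟩ :=
      (((WeakBilin.eval_continuous (topDualPairing 𝕜 E).flip f).tendsto x).comp hu).norm
        |>.bddAbove_range
    exact ⟨C, fun n => hC ⟨n, rfl⟩⟩
  obtain ⟨M, hM⟩ := banach_steinhaus hbdd
  exact ⟨M, fun n => (NormedSpace.inclusionInDoubleDualLi (E := E) 𝕜).norm_map _ ▸ hM n⟩

noncomputable def closedBallHomeomorph {r : ℝ} (hr : 0 < r) :
    {x : WeakSpace 𝕜 E // ‖(toWeakSpace 𝕜 E).symm x‖ ≤ 1} ≃ₜ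
      {x : WeakSpace 𝕜 E // ‖(toWeakSpace 𝕜 E).symm x‖ ≤ r} :=
  (Homeomorph.smulOfNeZero (r : 𝕜) (RCLike.ofReal_ne_zero.2 hr.ne')).subtype fun x => by
    simp [norm_smul, abs_of_pos hr, hr]

theorem countableCsStarCharacterAt_zero_of_unitBall [CompleteSpace E]
    (h : CountableCsStarCharacterAt {x : WeakSpace 𝕜 E // ‖(toWeakSpace 𝕜 E).symm x‖ ≤ 1}
      ⟨0, by simp⟩) :
    CountableCsStarCharacterAt (WeakSpace 𝕜 E) 0 := by
  refine .of_countable_cover (ι := ℕ) (p := fun k x => ‖(toWeakSpace 𝕜 E).symm x‖ ≤ k + 1)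
    (fun k => by simp only [map_zero, norm_zero]; positivity) (fun u hu => ?_) fun k => ?_
  · obtain ⟨M, hM⟩ := exists_norm_le_of_tendsto hu
    obtain ⟨k, hk⟩ := exists_nat_ge M
    exact ⟨k, fun n => (hM n).trans (by linarith)⟩
  · let e := closedBallHomeomorph (𝕜 := 𝕜) (E := E) k.cast_add_one_pos
    refine .of_isInducing e.symm.isInducing ?_
    convert h
    simp [e, closedBallHomeomorph]

end WeakSpace

/-- Corollary 4.3(ii): a Banach space with the weak topology has countable cs*-character iff
its closed unit ball with the weak topology has countable cs*-character. -/
theorem weak_csStar_iff_ball_csStar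
    {E : Type*} [NormedAddCommGroup E] [NormedSpace ℝ E] [CompleteSpace E] :
    CountableCsStarCharacter (WeakSpace ℝ E) ↔
      CountableCsStarCharacter
        {x : WeakSpace ℝ E // ‖(toWeakSpace ℝ E).symm x‖ ≤ 1} := by
  refine ⟨fun h x => (h x).of_isInducing IsInducing.subtypeVal, fun h x => ?_⟩
  have h0 := WeakSpace.countableCsStarCharacterAt_zero_of_unitBall (h ⟨0, by simp⟩)
  exact CountableCsStarCharacterAt.of_isInducing (Homeomorph.addRight (-x)).isInducing
    (by simpa using h0)
end

section
/- Let E be a Banach space with closed unit ball B. If B endowed with the weak topology is first countable, then B with the weak topology is metrizable. -/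
/-!
For `x, y` in the unit ball `B`, the point `(y - x) / 2` lies in `B` again. Hence the uniformity
that `B` inherits from the additive uniformity of the weak topology is the pullback of the
neighbourhood filter of `0` in `B` under `(x, y) ↦ (y - x) / 2`. A countable neighbourhood base
at `0` thus yields a countable base of the uniformity, and a Hausdorff uniform space with
countably generated uniformity is metrizable; the weak topology is Hausdorff by Hahn–Banach.
-/

open Filter Topology Uniformity

section SmulSubMem

variable {𝕜 E : Type*} [Field 𝕜] [AddCommGroup E] [Module 𝕜 E] {S : Set E} {c : 𝕜}

theorem uniformity_subtype_eq_comap_nhds_zero_of_smul_sub_mem [UniformSpace E]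
    [IsRightUniformAddGroup E] [ContinuousConstSMul 𝕜 E] (hc : c ≠ 0) (h0 : (0 : E) ∈ S)
    (hS : ∀ x ∈ S, ∀ y ∈ S, c • (y - x) ∈ S) :
    𝓤 S = comap (fun p : S × S ↦ (⟨c • (p.2.1 - p.1.1), hS _ p.1.2 _ p.2.2⟩ : S))
      (𝓝 ⟨0, h0⟩) := by
  have hsmul : comap (c • · : E → E) (𝓝 0) = 𝓝 0 := by
    simpa using (Homeomorph.smulOfNeZero c hc).comap_nhds_eq (0 : E)
  rw [uniformity_subtype, uniformity_eq_comap_nhds_zero, comap_comap, ← hsmul, comap_comap,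
    nhds_subtype, comap_comap]
  rfl

theorem metrizableSpace_subtype_of_smul_sub_mem [TopologicalSpace E] [IsTopologicalAddGroup E]
    [ContinuousConstSMul 𝕜 E] [T0Space E] [FirstCountableTopology S] (hc : c ≠ 0)
    (h0 : (0 : E) ∈ S) (hS : ∀ x ∈ S, ∀ y ∈ S, c • (y - x) ∈ S) :
    TopologicalSpace.MetrizableSpace S := by
  let := IsTopologicalAddGroup.rightUniformSpace E
  have := isUniformAddGroup_of_addCommGroup (G := E)
  have : (𝓤 S).IsCountablyGenerated := by
    rw [uniformity_subtype_eq_comap_nhds_zero_of_smul_sub_mem hc h0 hS]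
    infer_instance
  exact UniformSpace.metrizableSpace

end SmulSubMem

theorem norm_inv_two_smul_sub_le_one {E : Type*} [SeminormedAddCommGroup E] [NormedSpace ℝ E]
    {x y : E} (hx : ‖x‖ ≤ 1) (hy : ‖y‖ ≤ 1) : ‖(2 : ℝ)⁻¹ • (y - x)‖ ≤ 1 := by
  calc ‖(2 : ℝ)⁻¹ • (y - x)‖ ≤ 2⁻¹ * (‖y‖ + ‖x‖) := by
        rw [norm_smul, norm_inv, Real.norm_two]
        gcongr
        exact norm_sub_le y x
    _ ≤ 1 := by linarith

theorem ball_weak_metrizable_of_firstCountable_general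
    {E : Type*} [NormedAddCommGroup E] [NormedSpace ℝ E]
    [FirstCountableTopology {x : WeakSpace ℝ E // ‖(toWeakSpace ℝ E).symm x‖ ≤ 1}] :
    TopologicalSpace.MetrizableSpace
      {x : WeakSpace ℝ E // ‖(toWeakSpace ℝ E).symm x‖ ≤ 1} := by
  let B : Set (WeakSpace ℝ E) := {x | ‖(toWeakSpace ℝ E).symm x‖ ≤ 1}
  have : FirstCountableTopology B := ‹_›
  exact metrizableSpace_subtype_of_smul_sub_mem (S := B) (inv_ne_zero (two_ne_zero' ℝ))
    (by simp [B]) fun x hx y hy ↦ norm_inv_two_smul_sub_le_one hx hy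

/-- Proposition 4.5: if the closed unit ball of a Banach space is first countable in the weak
topology, then it is metrizable in the weak topology. -/
theorem ball_weak_metrizable_of_firstCountable
    {E : Type*} [NormedAddCommGroup E] [NormedSpace ℝ E] [CompleteSpace E]
    [FirstCountableTopology {x : WeakSpace ℝ E // ‖(toWeakSpace ℝ E).symm x‖ ≤ 1}] :
    TopologicalSpace.MetrizableSpace
      {x : WeakSpace ℝ E // ‖(toWeakSpace ℝ E).symm x‖ ≤ 1} :=
  ball_weak_metrizable_of_firstCountable_general
end

section
/- Any convex Fréchet–Urysohn subset F of a topological vector space E has the property (α₄): for every point x ∈ F and every array (x_{m,n})_{m,n∈ℕ} of points of F with lim_n x_{m,n} = x for each m, there exist a strictly increasing sequence (m_k) of natural numbers and natural numbers (n_k) such that lim_k x_{m_k,n_k} = x. -/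
open Filter Topology Set

/-!
If every row contains a point inseparable from `x`, one such point per row is the diagonal.
Otherwise fix a row `a` with no point inseparable from `x` and average it against the others:
`z i n = midpoint (a i) (xs i n)` lies in `F` by convexity, tends to `e i = midpoint (a i) x` as
`n → ∞`, and `e i → x` while no `e i` is inseparable from `x`. A topological vector space is R₁,
so a tail of each row of `z` has closure missing `x` but containing `e i`; hence `x` lies in the
closure of the union of these tails, and the Fréchet–Urysohn property yields a sequence in that
union converging to `x`. Since no single tail accumulates at `x`, its row indices tend to
infinity, and along it `xs i n = 2 z i n - a i → 2x - x = x`.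
-/

def IsFrechetUrysohnSet {X : Type*} [TopologicalSpace X] (F : Set X) : Prop :=
  ∀ A ⊆ F, ∀ x ∈ F, x ∈ closure A → ∃ u : ℕ → X, (∀ n, u n ∈ A) ∧ Tendsto u atTop (𝓝 x)

section Topology

variable {X : Type*} [TopologicalSpace X]

theorem tendsto_atTop_of_mem_of_notMem_closure {ι : Type*} {l : Filter ι} {S : ℕ → Set X}
    {x : X} {u : ι → X} {r : ι → ℕ} (hu : Tendsto u l (𝓝 x)) (hur : ∀ k, u k ∈ S (r k))
    (hS : ∀ i, x ∉ closure (S i)) : Tendsto r l atTop := by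
  refine tendsto_atTop.2 fun M => ?_
  have hM : ∀ᶠ y in 𝓝 x, ∀ i ∈ Iio M, y ∉ S i :=
    (finite_Iio M).eventually_all.2 fun i _ =>
      mem_interior_iff_mem_nhds.1 (interior_compl (s := S i) ▸ hS i)
  filter_upwards [hu hM] with k hk
  by_contra! h
  exact hk (r k) h (hur k)

theorem exists_notMem_closure_image_Ici [R1Space X] {z : ℕ → X} {e x : X}
    (hz : Tendsto z atTop (𝓝 e)) (he : ¬Inseparable e x) : ∃ N, x ∉ closure (z '' Ici N) := by
  have hdisj : Disjoint (map z atTop) (𝓝 x) :=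
    (disjoint_nhds_nhds_iff_not_inseparable.2 he).mono_left hz
  obtain ⟨N, -, hN⟩ := (atTop_basis.map z).disjoint_iff_left.1 hdisj
  exact ⟨N, fun h => (mem_closure_iff_nhds.1 h _ hN).ne_empty (compl_inter_self _)⟩

theorem IsFrechetUrysohnSet.exists_diagonal_tendsto [R1Space X] {F : Set X}
    (hF : IsFrechetUrysohnSet F) {x : X} (hx : x ∈ F) {z : ℕ → ℕ → X} (hzF : ∀ i n, z i n ∈ F)
    {e : ℕ → X} (hz : ∀ i, Tendsto (z i) atTop (𝓝 (e i))) (he : Tendsto e atTop (𝓝 x))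
    (hsep : ∀ i, ¬Inseparable (e i) x) :
    ∃ r s : ℕ → ℕ, Tendsto r atTop atTop ∧ Tendsto (fun k => z (r k) (s k)) atTop (𝓝 x) := by
  choose N hN using fun i => exists_notMem_closure_image_Ici (hz i) (hsep i)
  set S : ℕ → Set X := fun i => z i '' Ici (N i)
  have heS : ∀ i, e i ∈ closure (S i) := fun i =>
    mem_closure_of_tendsto (hz i) <|
      (eventually_ge_atTop (N i)).mono fun n hn => mem_image_of_mem _ hn
  have hxA : x ∈ closure (⋃ i, S i) :=
    closure_closure (s := ⋃ i, S i) ▸ mem_closure_of_tendsto he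
      (.of_forall fun i => closure_mono (subset_iUnion S i) (heS i))
  have hAF : (⋃ i, S i) ⊆ F := iUnion_subset fun i => image_subset_iff.2 fun n _ => hzF i n
  obtain ⟨u, huA, hu⟩ := hF _ hAF x hx hxA
  choose r hur using fun k => mem_iUnion.1 (huA k)
  choose s hs using fun k => (hur k).imp fun _ => And.right
  refine ⟨r, s, tendsto_atTop_of_mem_of_notMem_closure hu hur hN, ?_⟩
  simpa only [hs] using hu

end Topology

section TVS

variable {E : Type*} [AddCommGroup E] [Module ℝ E] [TopologicalSpace E] [IsTopologicalAddGroup E]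
  [ContinuousSMul ℝ E]

theorem IsFrechetUrysohnSet.exists_diagonal_tendsto_of_convex {F : Set E}
    (hF : IsFrechetUrysohnSet F) (hconv : Convex ℝ F) {x : E} (hx : x ∈ F) {xs : ℕ → ℕ → E}
    (hxsF : ∀ m n, xs m n ∈ F) (hxs : ∀ m, Tendsto (xs m) atTop (𝓝 x)) {a : ℕ → E}
    (haF : ∀ i, a i ∈ F) (ha : Tendsto a atTop (𝓝 x)) (hsep : ∀ i, ¬Inseparable (a i) x) :
    ∃ r s : ℕ → ℕ, Tendsto r atTop atTop ∧ Tendsto (fun k => xs (r k) (s k)) atTop (𝓝 x) := by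
  have hmid : Tendsto (fun i => midpoint ℝ (a i) x) atTop (𝓝 x) := by
    simpa using ha.midpoint (tendsto_const_nhds (x := x))
  have hsep' : ∀ i, ¬Inseparable (midpoint ℝ (a i) x) x := fun i h => hsep i <| by
    simpa [Equiv.pointReflection_midpoint_right] using
      h.map (f := fun y => Equiv.pointReflection y x)
        ((continuous_id.sub continuous_const).add continuous_id)
  obtain ⟨r, s, hr, hrs⟩ := hF.exists_diagonal_tendsto hx
    (fun i n => hconv.midpoint_mem (haF i) (hxsF i n))
    (fun i => (tendsto_const_nhds (x := a i)).midpoint (hxs i)) hmid hsep'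
  refine ⟨r, s, hr, ?_⟩
  convert (hrs.sub (ha.comp hr)).add hrs using 1
  · ext k
    exact (Equiv.pointReflection_midpoint_left (a (r k)) (xs (r k) (s k))).symm
  · simp

end TVS

/-- Proposition 4.6: any convex Fréchet–Urysohn subset `F` of a topological vector space has
property (α₄): any countable family of sequences in `F` converging to `x ∈ F` admits a
diagonal sequence, meeting infinitely many of them, which converges to `x`. -/
theorem convex_frechetUrysohn_alpha4
    {E : Type*} [AddCommGroup E] [Module ℝ E] [TopologicalSpace E]
    [IsTopologicalAddGroup E] [ContinuousSMul ℝ E]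
    (F : Set E) (hconv : Convex ℝ F)
    (hFU : ∀ A : Set E, A ⊆ F → ∀ x ∈ F, x ∈ closure A →
      ∃ u : ℕ → E, (∀ n, u n ∈ A) ∧ Tendsto u atTop (nhds x)) :
    ∀ x ∈ F, ∀ xs : ℕ → ℕ → E, (∀ m n, xs m n ∈ F) →
      (∀ m, Tendsto (xs m) atTop (nhds x)) →
      ∃ (mk nk : ℕ → ℕ), StrictMono mk ∧
        Tendsto (fun k => xs (mk k) (nk k)) atTop (nhds x) := by
  intro x hx xs hxsF hxs
  by_cases hrows : ∀ m, ∃ n, Inseparable (xs m n) x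
  · choose nk hnk using hrows
    exact ⟨id, nk, strictMono_id, tendsto_nhds.2 fun U hU hxU =>
      Eventually.of_forall fun k => ((hnk k).mem_open_iff hU).2 hxU⟩
  · obtain ⟨m₀, hm₀⟩ : ∃ m, ∀ n, ¬Inseparable (xs m n) x := by
      simpa only [not_forall, not_exists] using hrows
    obtain ⟨r, s, hr, hrs⟩ := IsFrechetUrysohnSet.exists_diagonal_tendsto_of_convex hFU hconv hx
      hxsF hxs (hxsF m₀) (hxs m₀) hm₀
    obtain ⟨φ, hφ, hrφ⟩ := strictMono_subseq_of_tendsto_atTop hr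
    exact ⟨r ∘ φ, s ∘ φ, hrφ, hrs.comp hφ.tendsto_atTop⟩
end

section
/- Let E be a Banach space with closed unit ball B carrying the weak topology. If B is Fréchet–Urysohn and has countable cs*-character, then B is first countable. -/
open Filter Topology Set

/-!
Let `D` be a countable cs*-network at `x` and `U` a neighbourhood of `x`; enumerate the members
`f 0, f 1, …` of `D` contained in `U`. If for every `n` some sequence converging to `x` eventually
avoided `f 0 ∪ ⋯ ∪ f n`, property (α₄) would merge these sequences into one sequence converging to
`x` that eventually avoids each `f i`, contradicting the cs*-property. So some finite union
`f 0 ∪ ⋯ ∪ f n` is met infinitely often by every sequence converging to `x`, and the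
Fréchet–Urysohn property makes it a neighbourhood of `x`: the finite unions of members of `D` that
are neighbourhoods of `x` form a countable base at `x`.

Property (α₄) holds at every non-isolated point `x` of a convex Fréchet–Urysohn set: pick
`y n → x` with `y n ≠ x`. The midpoints of `τ n k` and `y n` converge, as `k → ∞`, to the midpoint
`z n ≠ x` of `x` and `y n`, and `z n → x`. By Fréchet–Urysohn some sequence of these midpoints
converges to `x`; it meets each row only finitely often, since the `n`-th row accumulates only at
`z n`, and reflecting it back through the `y n` gives the required sequence.
-/

/-- Arhangel'skii's property (α₄) at `x`, in diagonal form. -/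
def AlphaFourAt (X : Type*) [TopologicalSpace X] (x : X) : Prop :=
  ∀ τ : ℕ → ℕ → X, (∀ n, Tendsto (τ n) atTop (𝓝 x)) →
    ∃ n k : ℕ → ℕ, Tendsto n atTop atTop ∧ Tendsto (fun j ↦ τ (n j) (k j)) atTop (𝓝 x)

section Topological

variable {X : Type*} [TopologicalSpace X]

theorem eventually_nhdsNE_notMem_range_of_tendsto [T2Space X] {x z : X} (hzx : z ≠ x)
    {a : ℕ → X} (ha : Tendsto a atTop (𝓝 z)) : ∀ᶠ p in 𝓝[≠] x, p ∉ range a := by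
  obtain ⟨U, W, hU, hW, hUW⟩ := t2_separation_nhds hzx.symm
  obtain ⟨K, hK⟩ := eventually_atTop.1 (ha hW)
  filter_upwards [nhdsNE_le_cofinite x ((finite_Iio K).image a).eventually_cofinite_notMem,
    nhdsWithin_le_nhds hU] with p hpK hpU
  rintro ⟨k, rfl⟩
  rcases lt_or_ge k K with hk | hk
  · exact hpK ⟨k, hk, rfl⟩
  · exact hUW.notMem_of_mem_left hpU (hK k hk)

theorem FrechetUrysohnSpace.exists_tendsto_diag [FrechetUrysohnSpace X] [T2Space X] {x : X}
    {z : ℕ → X} (hz : Tendsto z atTop (𝓝 x)) (hzx : ∀ n, z n ≠ x) {a : ℕ → ℕ → X}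
    (ha : ∀ n, Tendsto (a n) atTop (𝓝 (z n))) :
    ∃ n k : ℕ → ℕ, Tendsto n atTop atTop ∧ Tendsto (fun j ↦ a (n j) (k j)) atTop (𝓝 x) := by
  set A := (⋃ n, range (a n)) \ {x}
  have hzA (n : ℕ) : z n ∈ closure A :=
    mem_closure_of_tendsto (ha n) <| ((ha n).eventually_ne (hzx n)).mono fun k hk ↦
      ⟨mem_iUnion_of_mem n (mem_range_self k), hk⟩
  have hxA : x ∈ closure A := closure_closure (s := A) ▸ mem_closure_of_tendsto hz (.of_forall hzA)
  obtain ⟨b, hbA, hb⟩ := mem_closure_iff_seq_limit.1 hxA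
  choose n k hnk using fun j ↦ mem_iUnion.1 (hbA j).1
  have hb' : Tendsto b atTop (𝓝[≠] x) := tendsto_nhdsWithin_iff.2 ⟨hb, .of_forall fun j ↦ (hbA j).2⟩
  refine ⟨n, k, ?_, by simpa only [hnk] using hb⟩
  have : Tendsto n atTop cofinite := le_cofinite_iff_eventually_ne.2 fun m ↦ eventually_map.2 <|
    (hb'.eventually (eventually_nhdsNE_notMem_range_of_tendsto (hzx m) (ha m))).mono
      fun j hj hnj ↦ hj (hnj ▸ ⟨k j, hnk j⟩)
  rwa [Nat.cofinite_eq_atTop] at this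

theorem FrechetUrysohnSpace.mem_nhds_of_frequently_mem [FrechetUrysohnSpace X] {x : X}
    {S : Set X} (h : ∀ u : ℕ → X, Tendsto u atTop (𝓝 x) → ∃ᶠ j in atTop, u j ∈ S) :
    S ∈ 𝓝 x := by
  by_contra hS
  have : x ∈ closure Sᶜ := by rwa [closure_compl, mem_compl_iff, mem_interior_iff_mem_nhds]
  obtain ⟨u, huS, hu⟩ := mem_closure_iff_seq_limit.1 this
  obtain ⟨j, hj⟩ := (h u hu).exists
  exact huS j hj

theorem AlphaFourAt.exists_tendsto_eventually_notMem {x : X} (hx : AlphaFourAt X x)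
    {S : ℕ → Set X} (hS : Monotone S)
    (h : ∀ n, ∃ τ : ℕ → X, Tendsto τ atTop (𝓝 x) ∧ ∀ᶠ k in atTop, τ k ∉ S n) :
    ∃ u : ℕ → X, Tendsto u atTop (𝓝 x) ∧ ∀ i, ∀ᶠ j in atTop, u j ∉ S i := by
  choose τ hτ hτS using h
  choose N hN using fun n ↦ eventually_atTop.1 (hτS n)
  obtain ⟨n, k, hn, hu⟩ :=
    hx (fun n k ↦ τ n (k + N n)) fun n ↦ (hτ n).comp (tendsto_add_atTop_nat _)
  refine ⟨_, hu, fun i ↦ ?_⟩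
  filter_upwards [tendsto_atTop.1 hn i] with j hj
  exact fun hji ↦ hN (n j) _ (Nat.le_add_left _ _) (hS hj hji)

theorem AlphaFourAt.exists_finite_sUnion_mem_nhds_subset [FrechetUrysohnSpace X] {x : X}
    (hx : AlphaFourAt X x) {D : Set (Set X)} (hDc : D.Countable)
    (hD : ∀ u : ℕ → X, Tendsto u atTop (𝓝 x) →
      ∀ U ∈ 𝓝 x, ∃ D₀ ∈ D, D₀ ⊆ U ∧ {n : ℕ | u n ∈ D₀}.Infinite)
    {U : Set X} (hU : U ∈ 𝓝 x) : ∃ F ⊆ D, F.Finite ∧ ⋃₀ F ∈ 𝓝 x ∧ ⋃₀ F ⊆ U := by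
  obtain ⟨D₀, hD₀, hD₀U, -⟩ := hD _ tendsto_const_nhds U hU
  obtain ⟨f, hf⟩ := (hDc.mono (sep_subset D (· ⊆ U))).exists_eq_range
    ⟨D₀, hD₀, hD₀U⟩
  have hfDU (i : ℕ) : f i ∈ D ∧ f i ⊆ U :=
    (hf ▸ mem_range_self i : f i ∈ {d ∈ D | d ⊆ U})
  suffices ∃ n, ∀ u, Tendsto u atTop (𝓝 x) → ∃ᶠ j in atTop, u j ∈ ⋃ i ∈ Iic n, f i by
    obtain ⟨n, hn⟩ := this
    refine ⟨f '' Iic n, image_subset_iff.2 fun i _ ↦ (hfDU i).1, (finite_Iic n).image f, ?_, ?_⟩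
    · rw [sUnion_image]
      exact FrechetUrysohnSpace.mem_nhds_of_frequently_mem hn
    · exact sUnion_subset <| forall_mem_image.2 fun i _ ↦ (hfDU i).2
  by_contra! hno
  obtain ⟨u, hu, huf⟩ := hx.exists_tendsto_eventually_notMem
    (fun m n hmn ↦ biUnion_subset_biUnion_left (Iic_subset_Iic.2 hmn)) hno
  obtain ⟨D₀, hD₀, hD₀U, hinf⟩ := hD u hu U hU
  obtain ⟨i, rfl⟩ : D₀ ∈ range f := hf ▸ ⟨hD₀, hD₀U⟩
  obtain ⟨j, hji, hj⟩ := ((huf i).and_frequently (Nat.frequently_atTop_iff_infinite.2 hinf)).exists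
  exact hji (mem_biUnion (mem_Iic.2 le_rfl) hj)

theorem CountableCsStarCharacterAt.isCountablyGenerated [FrechetUrysohnSpace X] {x : X}
    (hcs : CountableCsStarCharacterAt X x) (hx : AlphaFourAt X x) : (𝓝 x).IsCountablyGenerated := by
  obtain ⟨D, hDc, hD⟩ := hcs
  refine HasCountableBasis.isCountablyGenerated (s := sUnion)
    (p := fun F ↦ F ⊆ D ∧ F.Finite ∧ ⋃₀ F ∈ 𝓝 x) ⟨⟨fun U ↦ ⟨fun hU ↦ ?_, ?_⟩⟩, ?_⟩
  · obtain ⟨F, hFD, hF, hFx, hFU⟩ := hx.exists_finite_sUnion_mem_nhds_subset hDc hD hU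
    exact ⟨F, ⟨hFD, hF, hFx⟩, hFU⟩
  · rintro ⟨F, ⟨-, -, hFx⟩, hFU⟩
    exact mem_of_superset hFx hFU
  · exact (countable_ofPred_finite_subset hDc).mono fun _ hF ↦ And.intro hF.2.1 hF.1

end Topological

theorem Convex.alphaFourAt {E : Type*} [AddCommGroup E] [Module ℝ E] [TopologicalSpace E]
    [IsTopologicalAddGroup E] [ContinuousSMul ℝ E] [T2Space E] {B : Set E} (hB : Convex ℝ B)
    [FrechetUrysohnSpace B] (x : B) : AlphaFourAt B x := by
  intro τ hτ
  rcases (𝓝[≠] x).eq_or_neBot with hiso | hx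
  · have hpure : 𝓝 x = pure x := by rw [← nhdsNE_sup_pure, hiso, bot_sup_eq]
    have hxev : ∀ᶠ p in 𝓝 x, p = x := by rw [hpure]; exact eventually_pure.2 rfl
    choose k hk using fun n ↦ ((hτ n).eventually hxev).exists
    exact ⟨id, k, tendsto_id, tendsto_const_nhds.congr fun j ↦ (hk j).symm⟩
  obtain ⟨y, hyx, hy⟩ := mem_closure_iff_seq_limit.1 (mem_closure_iff_nhdsWithin_neBot.2 hx)
  let mid (p q : B) : B := ⟨midpoint ℝ (p : E) q, hB.midpoint_mem p.2 q.2⟩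
  have tendsto_mid {l : Filter ℕ} {f g : ℕ → B} {p q : B} (hf : Tendsto f l (𝓝 p))
      (hg : Tendsto g l (𝓝 q)) : Tendsto (fun i ↦ mid (f i) (g i)) l (𝓝 (mid p q)) :=
    tendsto_subtype_rng.2 <| (tendsto_subtype_rng.1 hf).midpoint (tendsto_subtype_rng.1 hg)
  have hz : Tendsto (fun n ↦ mid x (y n)) atTop (𝓝 x) := by
    simpa only [show mid x x = x from Subtype.ext (midpoint_self ℝ _)] using
      tendsto_mid (tendsto_const_nhds (x := x)) hy
  have hzx (n : ℕ) : mid x (y n) ≠ x := fun h ↦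
    hyx n (Subtype.ext ((midpoint_eq_left_iff ℝ).1 (congrArg Subtype.val h)).symm)
  obtain ⟨n, k, hn, hnk⟩ := FrechetUrysohnSpace.exists_tendsto_diag hz hzx
    (a := fun n k ↦ mid (τ n k) (y n)) fun n ↦ tendsto_mid (hτ n) tendsto_const_nhds
  have hrefl := ((tendsto_subtype_rng.1 hnk).vsub (tendsto_subtype_rng.1 (hy.comp hn))).vadd
    (tendsto_subtype_rng.1 hnk)
  rw [vsub_self, zero_vadd] at hrefl
  exact ⟨n, k, hn, tendsto_subtype_rng.2 <| hrefl.congr fun j ↦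
    Equiv.pointReflection_midpoint_right (R := ℝ) _ _⟩

theorem ball_weak_firstCountable_of_FU_csStar_general
    {E : Type*} [NormedAddCommGroup E] [NormedSpace ℝ E]
    [FrechetUrysohnSpace {x : WeakSpace ℝ E // ‖(toWeakSpace ℝ E).symm x‖ ≤ 1}]
    (hcs : ∀ x : {x : WeakSpace ℝ E // ‖(toWeakSpace ℝ E).symm x‖ ≤ 1},
      CountableCsStarCharacterAt _ x) :
    FirstCountableTopology {x : WeakSpace ℝ E // ‖(toWeakSpace ℝ E).symm x‖ ≤ 1} := by
  have hB : Convex ℝ {x : WeakSpace ℝ E | ‖(toWeakSpace ℝ E).symm x‖ ≤ 1} := by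
    simpa [preimage] using (convex_closedBall (0 : E) 1).linear_preimage
      (toWeakSpace ℝ E).symm.toLinearMap
  have : FrechetUrysohnSpace {x : WeakSpace ℝ E | ‖(toWeakSpace ℝ E).symm x‖ ≤ 1} := ‹_›
  exact ⟨fun x ↦ (hcs x).isCountablyGenerated (hB.alphaFourAt x)⟩

/-- Proposition 4.7 (main step): for a Banach space `E`, if the closed unit ball with the weak
topology is Fréchet–Urysohn and has countable cs*-character, then it is first countable. -/
theorem ball_weak_firstCountable_of_FU_csStar
    {E : Type*} [NormedAddCommGroup E] [NormedSpace ℝ E] [CompleteSpace E]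
    [FrechetUrysohnSpace {x : WeakSpace ℝ E // ‖(toWeakSpace ℝ E).symm x‖ ≤ 1}]
    (hcs : ∀ x : {x : WeakSpace ℝ E // ‖(toWeakSpace ℝ E).symm x‖ ≤ 1},
      CountableCsStarCharacterAt _ x) :
    FirstCountableTopology {x : WeakSpace ℝ E // ‖(toWeakSpace ℝ E).symm x‖ ≤ 1} :=
  ball_weak_firstCountable_of_FU_csStar_general hcs
end

section
/- Let X be a σ-compact Tychonoff space. Then C_p(X), the space of continuous real-valued functions on X with the topology of pointwise convergence, has countable fan tightness; consequently, for every metrizable locally convex space E, the space E with its weak topology has countable fan tightness. -/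
/-!
Let `X = ⋃ₘ Kₘ` with `Kₘ` compact and increasing, and let `f ∈ closure Aₙ` for every `n`.
Code `n` as a triple `(m, k, j)`. The compact set `Kₘᵏ` is covered by the open sets
`{y | ∀ i, |g yᵢ - f yᵢ| < 1/(j+1)}` for `g ∈ Aₙ`, so finitely many `g ∈ Aₙ` approximate `f`
within `1/(j+1)` at any `k` points of `Kₘ`. A basic neighbourhood of `f` in `C_p(X)` is given by
finitely many points and a precision, so it meets the union of these finite sets.

For metrizable `E`, the weak-* dual is the union of the polars of a countable neighbourhood basis
of `0`, which are compact by Banach–Alaoglu, and evaluation embeds `E` with its weak topology into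
`C_p` of the weak-* dual; countable fan tightness passes to subspaces.
-/

open Filter Topology Set

/-- `X` has countable fan tightness at `x`. -/
def CountableFanTightnessAt (X : Type*) [TopologicalSpace X] (x : X) : Prop :=
  ∀ A : ℕ → Set X, (∀ n, x ∈ closure (A n)) →
    ∃ F : ℕ → Set X, (∀ n, F n ⊆ A n) ∧ (∀ n, (F n).Finite) ∧
      x ∈ closure (⋃ n, F n)

/-- `C_p(X)`: the continuous real-valued functions on `X` with the topology of pointwise
convergence (the subspace topology from the product `X → ℝ`). -/
abbrev Cp (X : Type*) [TopologicalSpace X] : Type _ := {f : X → ℝ // Continuous f}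

theorem CountableFanTightnessAt.of_isInducing {Y Z : Type*} [TopologicalSpace Y]
    [TopologicalSpace Z] {i : Y → Z} (hi : IsInducing i) {x : Y}
    (h : CountableFanTightnessAt Z (i x)) : CountableFanTightnessAt Y x := by
  intro A hA
  simp only [hi.closure_eq_preimage_closure_image, mem_preimage] at hA ⊢
  obtain ⟨G, hGA, hGfin, hG⟩ := h (fun n => i '' A n) hA
  choose F hFA hFfin hFG using fun n =>
    exists_subset_image_finite_and.1 ⟨G n, hGA n, hGfin n, rfl⟩
  refine ⟨F, hFA, hFfin, ?_⟩
  rwa [image_iUnion, ← iUnion_congr hFG]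

theorem exists_finset_forall_dist_lt_subset_of_mem_nhds {ι Y : Type*} [PseudoMetricSpace Y]
    {f : ι → Y} {W : Set (ι → Y)} (hW : W ∈ 𝓝 f) :
    ∃ I : Finset ι, ∃ ε > 0, {g | ∀ i ∈ I, dist (g i) (f i) < ε} ⊆ W := by
  obtain ⟨I, t, ht, hIW⟩ := Filter.mem_pi'.1 (nhds_pi (a := f) ▸ hW)
  have hsmall : ∀ᶠ ε in 𝓝[>] (0 : ℝ), ∀ i ∈ I, Metric.ball (f i) ε ⊆ t i := by
    refine I.eventually_all.2 fun i _ => ?_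
    obtain ⟨r, hr, hrt⟩ := Metric.mem_nhds_iff.1 (ht i)
    filter_upwards [nhdsWithin_le_nhds (eventually_lt_nhds hr)] with ε hε
    exact (Metric.ball_subset_ball hε.le).trans hrt
  obtain ⟨ε, hεt, hε⟩ := (hsmall.and self_mem_nhdsWithin).exists
  exact ⟨I, ε, hε, fun g hg => hIW fun i hi => hεt i hi (hg i hi)⟩

section Cp

variable {X : Type*} [TopologicalSpace X]

theorem Cp.exists_finite_subset_forall_dist_lt {K : Set X} (hK : IsCompact K) (k : ℕ)
    {ε : ℝ} (hε : 0 < ε) {A : Set (Cp X)} {f : Cp X} (hf : f ∈ closure A) :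
    ∃ F ⊆ A, F.Finite ∧ ∀ y : Fin k → X, (∀ i, y i ∈ K) →
      ∃ g ∈ F, ∀ i, dist (g.1 (y i)) (f.1 (y i)) < ε := by
  set U : Cp X → Set (Fin k → X) := fun g => {y | ∀ i, dist (g.1 (y i)) (f.1 (y i)) < ε}
  have hU : ∀ g : Cp X, IsOpen (U g) := fun g => by
    simp only [U, ofPred_forall]
    exact isOpen_iInter_of_finite fun i =>
      isOpen_lt ((g.2.comp (continuous_apply i)).dist (f.2.comp (continuous_apply i)))
        continuous_const
  have hcover : univ.pi (fun _ => K) ⊆ ⋃ g ∈ A, U g := fun y _ => by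
    have hnear : ∀ᶠ g in 𝓝 f, y ∈ U g := eventually_all.2 fun i =>
      ((continuous_apply (y i)).comp continuous_subtype_val).continuousAt
        (Metric.ball_mem_nhds (f.1 (y i)) hε)
    obtain ⟨g, hgU, hgA⟩ := mem_closure_iff_nhds.1 hf _ hnear
    exact mem_biUnion hgA hgU
  obtain ⟨F, hFA, hFfin, hF⟩ := (isCompact_univ_pi fun _ => hK).elim_finite_subcover_image
    (fun g _ => hU g) hcover
  refine ⟨F, hFA, hFfin, fun y hy => ?_⟩
  simpa [U] using hF (mem_univ_pi.2 hy)

theorem Cp.countableFanTightnessAt [SigmaCompactSpace X] (f : Cp X) :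
    CountableFanTightnessAt (Cp X) f := by
  intro A hA
  let e : ℕ ≃ ℕ × ℕ × ℕ := (Denumerable.eqv (ℕ × ℕ × ℕ)).symm
  choose F hFA hFfin hF using fun n => Cp.exists_finite_subset_forall_dist_lt
    (isCompact_compactCovering X (e n).1) (e n).2.1 (Nat.one_div_pos_of_nat (n := (e n).2.2)) (hA n)
  refine ⟨F, hFA, hFfin, mem_closure_iff_nhds.2 fun O hO => ?_⟩
  obtain ⟨W, hW, hWO⟩ := (mem_nhds_induced _ _ _).1 hO
  obtain ⟨I, ε, hε, hIW⟩ := exists_finset_forall_dist_lt_subset_of_mem_nhds hW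
  obtain ⟨m, hIm⟩ : ∃ m, (I : Set X) ⊆ compactCovering X m :=
    Monotone.directed_le (fun _ _ h => compactCovering_subset X h)
      |>.exists_mem_subset_of_finset_subset_biUnion (by simp [iUnion_compactCovering])
  obtain ⟨j, hj⟩ := exists_nat_one_div_lt hε
  let n := e.symm (m, I.card, j)
  have hn : e n = (m, I.card, j) := e.apply_symm_apply _
  have hFn := hF n
  rw [hn] at hFn
  obtain ⟨g, hgF, hg⟩ := hFn (fun i => I.equivFin.symm i) fun i => hIm (I.equivFin.symm i).2
  refine ⟨g, hWO (hIW fun x hx => ?_), mem_iUnion.2 ⟨n, hgF⟩⟩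
  simpa using (hg (I.equivFin ⟨x, hx⟩)).trans hj

end Cp

section WeakDual

open scoped Pointwise

variable {E : Type*} [AddCommGroup E] [Module ℝ E] [TopologicalSpace E]
  [IsTopologicalAddGroup E] [ContinuousSMul ℝ E]

theorem LinearMap.continuous_of_abs_le_one_of_mem_nhds (l : E →ₗ[ℝ] ℝ) {U : Set E}
    (hU : U ∈ 𝓝 0) (hl : ∀ x ∈ U, |l x| ≤ 1) : Continuous l := by
  refine continuous_of_continuousAt_zero l (Metric.tendsto_nhds.2 fun ε hε => ?_)
  have hεU : (ε / 2) • U ∈ 𝓝 (0 : E) := (set_smul_mem_nhds_zero_iff (by positivity)).2 hU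
  filter_upwards [hεU]
  rintro _ ⟨v, hv, rfl⟩
  calc dist (l ((ε / 2) • v)) (l 0) = ε / 2 * |l v| := by simp [abs_of_pos hε]
    _ ≤ ε / 2 * 1 := by gcongr; exact hl v hv
    _ < ε := by linarith

theorem WeakDual.isCompact_polar_of_mem_nhds {U : Set E} (hU : U ∈ 𝓝 0) :
    IsCompact (WeakDual.polar ℝ U) := by
  set S : Set (E → ℝ) := range ((⇑) : (E →ₗ[ℝ] ℝ) → E → ℝ) ∩ {g | ∀ x ∈ U, |g x| ≤ 1}
  have hbound : ∀ x, ∃ c, ∀ g ∈ S, |g x| ≤ c := fun x => by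
    obtain ⟨a, ha⟩ := (absorbent_nhds_zero (𝕜 := ℝ) hU x).exists
    obtain ⟨u, hu, rfl⟩ := ha (mem_singleton x)
    refine ⟨|a|, ?_⟩
    rintro _ ⟨⟨l, rfl⟩, hl⟩
    simpa [abs_mul] using mul_le_mul_of_nonneg_left (hl u hu) (abs_nonneg a)
  choose c hc using hbound
  have hS_closed : IsClosed S := by
    refine (LinearMap.isClosed_range_coe E ℝ (RingHom.id ℝ)).inter ?_
    simp only [ofPred_forall]
    exact isClosed_biInter fun x _ => isClosed_le (continuous_apply x).abs continuous_const
  have hS : IsCompact S := (isCompact_univ_pi fun x => isCompact_Icc).of_isClosed_subset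
    hS_closed fun g hg x _ => abs_le.1 (hc x g hg)
  have hS_range : S ⊆ range ((⇑) : WeakDual ℝ E → E → ℝ) := by
    rintro _ ⟨⟨l, rfl⟩, hl⟩
    exact ⟨⟨l, l.continuous_of_abs_le_one_of_mem_nhds hU hl⟩, rfl⟩
  have hpolar : WeakDual.polar ℝ U = (⇑) ⁻¹' S := by
    ext φ
    simpa [WeakDual.polar_def, S] using fun _ => ⟨(WeakDual.toStrongDual φ : E →ₗ[ℝ] ℝ), rfl⟩
  rw [hpolar]
  exact DFunLike.coe_injective.isEmbedding_induced.isInducing.isCompact_preimage' hS hS_range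

instance WeakDual.sigmaCompactSpace [FirstCountableTopology E] :
    SigmaCompactSpace (WeakDual ℝ E) := by
  obtain ⟨b, hb⟩ := (𝓝 (0 : E)).exists_antitone_basis
  refine ⟨⟨fun n => WeakDual.polar ℝ (b n),
    fun n => WeakDual.isCompact_polar_of_mem_nhds (hb.mem n), iUnion_eq_univ_iff.2 fun φ => ?_⟩⟩
  have hball : Metric.closedBall (0 : ℝ) 1 ∈ 𝓝 (φ 0) := by
    simpa using Metric.closedBall_mem_nhds (0 : ℝ) one_pos
  obtain ⟨n, hn⟩ := hb.mem_iff.1 <|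
    (WeakDual.toStrongDual φ).continuous.continuousAt.preimage_mem_nhds hball
  exact ⟨n, fun x hx => by simpa using hn hx⟩

end WeakDual

section WeakSpace

variable {E : Type*} [AddCommGroup E] [Module ℝ E] [TopologicalSpace E]

def WeakSpace.toCp (x : WeakSpace ℝ E) : Cp (WeakDual ℝ E) :=
  ⟨fun φ => topDualPairing ℝ E φ x, WeakDual.eval_continuous (𝕜 := ℝ) (E := E) x⟩

theorem WeakSpace.isInducing_toCp : IsInducing (WeakSpace.toCp (E := E)) :=
  IsInducing.subtypeVal.of_comp_iff.1 ⟨by rfl⟩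

end WeakSpace

/-- Theorem 1.2 (and its consequence): for a σ-compact Tychonoff space `X` the space `C_p(X)`
has countable fan tightness; consequently every metrizable locally convex space with the weak
topology has countable fan tightness. -/
theorem cp_fan_tightness_and_weak_fan_tightness :
    (∀ (X : Type) [TopologicalSpace X] [T35Space X] [SigmaCompactSpace X],
      ∀ f : Cp X, CountableFanTightnessAt (Cp X) f) ∧
    (∀ (E : Type) [AddCommGroup E] [Module ℝ E] [TopologicalSpace E]
      [IsTopologicalAddGroup E] [ContinuousSMul ℝ E] [LocallyConvexSpace ℝ E]
      [TopologicalSpace.MetrizableSpace E],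
      ∀ x : WeakSpace ℝ E, CountableFanTightnessAt (WeakSpace ℝ E) x) := by
  refine ⟨fun X _ _ _ f => Cp.countableFanTightnessAt f, fun E _ _ _ _ _ _ _ x => ?_⟩
  exact (Cp.countableFanTightnessAt (WeakSpace.toCp x)).of_isInducing WeakSpace.isInducing_toCp
end

section
/- Let E be a Banach space. If E with the weak topology has the strong Pytkeev property, then E is finite-dimensional. -/
/-!
Countable fan tightness turns a countable Pytkeev network `e` at `x` into a countable
neighbourhood base: if no finite union of members `e k ⊆ U` (together with `x`) were a
neighbourhood of `x`, the complements of the first `n` of them would all accumulate at `x`, and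
fan tightness would select from them finitely many points each, forming a set that accumulates at
`x` but meets every member `e k ⊆ U` in only finitely many points.

The weak topology of a normed space has countable fan tightness at `0` because the dual is the
union of the weak-* compact balls of radius `k` (Banach–Alaoglu): for each `k` finitely many points
of a set accumulating at `0` already approach `0` against every `k`-tuple of functionals of norm
at most `k`. On the other hand, in infinite dimension every weak neighbourhood of `0` contains a
nontrivial subspace, so a countable base at `0` would yield a weakly null sequence of unbounded
norm, which the uniform boundedness principle forbids.
-/

open Filter Topology Set

/-- `X` has the strong Pytkeev property at `x`. -/
def StrongPytkeevAt (X : Type*) [TopologicalSpace X] (x : X) : Prop :=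
  ∃ D : Set (Set X), D.Countable ∧
    ∀ U ∈ nhds x, ∀ A : Set X, x ∈ closure A \ A →
      ∃ N ∈ D, N ⊆ U ∧ (N ∩ A).Infinite

def CountableFanTightAt (X : Type*) [TopologicalSpace X] (x : X) : Prop :=
  ∀ A : ℕ → Set X, (∀ n, x ∈ closure (A n)) →
    ∃ F : ℕ → Set X, (∀ n, F n ⊆ A n) ∧ (∀ n, (F n).Finite) ∧ x ∈ closure (⋃ n, F n)

section Topology

variable {X : Type*} [TopologicalSpace X] {x : X}

theorem StrongPytkeevAt.exists_seq (h : StrongPytkeevAt X x) :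
    ∃ e : ℕ → Set X, ∀ U ∈ 𝓝 x, ∀ A : Set X, x ∈ closure A \ A →
      ∃ k, e k ⊆ U ∧ (e k ∩ A).Infinite := by
  obtain ⟨D, hDc, hD⟩ := h
  obtain ⟨e, he⟩ := Set.countable_iff_exists_subset_range.1 hDc
  refine ⟨e, fun U hU A hA => ?_⟩
  obtain ⟨N, hN, hNU, hNA⟩ := hD U hU A hA
  obtain ⟨k, rfl⟩ := he hN
  exact ⟨k, hNU, hNA⟩

theorem CountableFanTightAt.exists_finset_insert_biUnion_mem_nhds
    (hcft : CountableFanTightAt X x) {e : ℕ → Set X}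
    (he : ∀ U ∈ 𝓝 x, ∀ A : Set X, x ∈ closure A \ A → ∃ k, e k ⊆ U ∧ (e k ∩ A).Infinite)
    {U : Set X} (hU : U ∈ 𝓝 x) :
    ∃ T : Finset ℕ, (∀ k ∈ T, e k ⊆ U) ∧ insert x (⋃ k ∈ T, e k) ∈ 𝓝 x := by
  classical
  by_contra! hne
  set T : ℕ → Finset ℕ := fun n => {k ∈ Finset.range (n + 1) | e k ⊆ U}
  set B : ℕ → Set X := fun n => insert x (⋃ k ∈ T n, e k)
  have hB : ∀ n, B n ∉ 𝓝 x := fun n => hne (T n) fun k hk => (Finset.mem_filter.1 hk).2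
  obtain ⟨F, hFB, hFfin, hxF⟩ := hcft (fun n => (B n)ᶜ) fun n => by
    rw [closure_compl, mem_compl_iff, mem_interior_iff_mem_nhds]
    exact hB n
  have hxF' : x ∉ ⋃ n, F n := by
    simp only [mem_iUnion, not_exists]
    exact fun n hn => hFB n hn (mem_insert x _)
  obtain ⟨k, hkU, hkF⟩ := he U hU _ ⟨hxF, hxF'⟩
  -- from stage `k` on, `e k` lies in `B n`, which `F n` avoids
  refine hkF (((Finset.range k).finite_toSet.biUnion fun n _ => hFfin n).subset ?_)
  rintro y ⟨hye, hyF⟩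
  obtain ⟨n, hn⟩ := mem_iUnion.1 hyF
  refine mem_biUnion (Finset.mem_range.2 (lt_of_not_ge fun hkn => hFB n hn ?_)) hn
  have hkT : k ∈ T n := Finset.mem_filter.2 ⟨Finset.mem_range.2 (Nat.lt_succ_of_le hkn), hkU⟩
  exact mem_insert_of_mem x (mem_biUnion hkT hye)

theorem StrongPytkeevAt.isCountablyGenerated_nhds (h : StrongPytkeevAt X x)
    (hcft : CountableFanTightAt X x) : (𝓝 x).IsCountablyGenerated := by
  obtain ⟨e, he⟩ := h.exists_seq
  have hbasis : (𝓝 x).HasBasis (fun T : Finset ℕ => insert x (⋃ k ∈ T, e k) ∈ 𝓝 x)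
      fun T => insert x (⋃ k ∈ T, e k) := by
    refine ⟨fun U => ⟨fun hU => ?_, fun ⟨T, hT, hTU⟩ => mem_of_superset hT hTU⟩⟩
    obtain ⟨T, hTU, hT⟩ := hcft.exists_finset_insert_biUnion_mem_nhds he hU
    exact ⟨T, hT, insert_subset (mem_of_mem_nhds hU) (iUnion₂_subset hTU)⟩
  exact hbasis.isCountablyGenerated

end Topology

theorem Finset.exists_fin_tuple_of_card_le {α : Type*} [Zero α] (s : Finset α) {n : ℕ}
    (hn : s.card ≤ n) : ∃ G : Fin n → α, (∀ i, G i = 0 ∨ G i ∈ s) ∧ ∀ a ∈ s, ∃ i, G i = a := by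
  refine ⟨fun i => if h : (i : ℕ) < s.card then s.equivFin.symm ⟨i, h⟩ else 0, fun i => ?_,
    fun a ha => ⟨Fin.castLE hn (s.equivFin ⟨a, ha⟩), by simp⟩⟩
  dsimp only
  split_ifs
  · exact Or.inr (Finset.coe_mem _)
  · exact Or.inl rfl

theorem exists_lt_norm_forall_eq_zero {𝕜 E : Type*} [NontriviallyNormedField 𝕜]
    [NormedAddCommGroup E] [NormedSpace 𝕜 E] (hE : ¬FiniteDimensional 𝕜 E)
    (s : Finset (StrongDual 𝕜 E)) (R : ℝ) : ∃ x : E, R < ‖x‖ ∧ ∀ f ∈ s, f x = 0 := by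
  let Φ : E →ₗ[𝕜] s → 𝕜 := LinearMap.pi fun f => (f : StrongDual 𝕜 E).toLinearMap
  have : Nontrivial (LinearMap.ker Φ) := by
    refine Submodule.nontrivial_iff_ne_bot.2 fun hker => hE ?_
    exact FiniteDimensional.of_injective Φ (LinearMap.ker_eq_bot.1 hker)
  obtain ⟨x, hx⟩ := NormedSpace.exists_lt_norm 𝕜 (LinearMap.ker Φ) R
  exact ⟨x, hx, fun f hf => congr_fun (LinearMap.mem_ker.1 x.2) ⟨f, hf⟩⟩

namespace WeakSpace

section NontriviallyNormedField

variable {𝕜 E : Type*} [NontriviallyNormedField 𝕜] [NormedAddCommGroup E] [NormedSpace 𝕜 E]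

theorem hasBasis_nhds_zero :
    (𝓝 (0 : WeakSpace 𝕜 E)).HasBasis (fun sε : Finset (StrongDual 𝕜 E) × ℝ => 0 < sε.2)
      fun sε => {x | ∀ f ∈ sε.1, ‖f x‖ < sε.2} := by
  refine (topDualPairing 𝕜 E).flip.weakBilin_withSeminorms.hasBasis_zero_ball.congr
    (fun _ => Iff.rfl) ?_
  rintro ⟨s, ε⟩ hε
  ext x
  simp only [Seminorm.ball_finset_sup_eq_iInter _ _ _ hε, mem_iInter, Seminorm.mem_ball, sub_zero]
  rfl

theorem mem_closure_zero_iff {A : Set (WeakSpace 𝕜 E)} :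
    (0 : WeakSpace 𝕜 E) ∈ closure A ↔
      ∀ (s : Finset (StrongDual 𝕜 E)) (ε : ℝ), 0 < ε → ∃ a ∈ A, ∀ f ∈ s, ‖f a‖ < ε := by
  simp [mem_closure_iff_nhds_basis hasBasis_nhds_zero]

theorem exists_lt_norm_mem_of_mem_nhds_zero (hE : ¬FiniteDimensional 𝕜 E)
    {V : Set (WeakSpace 𝕜 E)} (hV : V ∈ 𝓝 0) (R : ℝ) :
    ∃ x : E, R < ‖x‖ ∧ toWeakSpace 𝕜 E x ∈ V := by
  obtain ⟨⟨s, ε⟩, hε, hsV⟩ := hasBasis_nhds_zero.mem_iff.1 hV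
  obtain ⟨x, hx, hsx⟩ := exists_lt_norm_forall_eq_zero hE s R
  refine ⟨x, hx, hsV fun f hf => ?_⟩
  change ‖f x‖ < ε
  simpa [hsx f hf] using hε

theorem exists_finite_subset_forall_mem_compact {ι : Type*} [Fintype ι]
    {C : Set (ι → WeakDual 𝕜 E)} (hC : IsCompact C) {A : Set (WeakSpace 𝕜 E)}
    (hA : (0 : WeakSpace 𝕜 E) ∈ closure A) {δ : ℝ} (hδ : 0 < δ) :
    ∃ F ⊆ A, F.Finite ∧ ∀ G ∈ C, ∃ a ∈ F, ∀ i, ‖G i a‖ < δ := by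
  classical
  let W : WeakSpace 𝕜 E → Set (ι → WeakDual 𝕜 E) := fun a => ⋂ i, {G | ‖G i a‖ < δ}
  have hW : ∀ a ∈ A, IsOpen (W a) := fun a _ =>
    isOpen_iInter_of_finite fun i => isOpen_lt
      ((WeakDual.eval_continuous (𝕜 := 𝕜) (E := E) a).comp (continuous_apply i)).norm
      continuous_const
  have hCW : C ⊆ ⋃ a ∈ A, W a := by
    intro G _
    obtain ⟨a, ha, hGa⟩ := mem_closure_zero_iff.1 hA
      (Finset.univ.image fun i => WeakDual.toStrongDual (G i)) δ hδ
    exact mem_biUnion ha <| mem_iInter.2 fun i =>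
      hGa _ (Finset.mem_image_of_mem _ (Finset.mem_univ i))
  obtain ⟨F, hFA, hF, hCF⟩ := hC.elim_finite_subcover_image hW hCW
  refine ⟨F, hFA, hF, fun G hG => ?_⟩
  obtain ⟨a, ha, hGa⟩ := mem_iUnion₂.1 (hCF hG)
  exact ⟨a, ha, fun i => mem_iInter.1 hGa i⟩

theorem exists_finite_subset_forall_card_le_norm_le [ProperSpace 𝕜] (n : ℕ) {r : ℝ}
    (hr : 0 ≤ r) {A : Set (WeakSpace 𝕜 E)} (hA : (0 : WeakSpace 𝕜 E) ∈ closure A) {δ : ℝ}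
    (hδ : 0 < δ) :
    ∃ F ⊆ A, F.Finite ∧ ∀ s : Finset (StrongDual 𝕜 E), s.card ≤ n → (∀ f ∈ s, ‖f‖ ≤ r) →
      ∃ a ∈ F, ∀ f ∈ s, ‖f a‖ < δ := by
  let K : Set (WeakDual 𝕜 E) := WeakDual.toStrongDual ⁻¹' Metric.closedBall 0 r
  have hC : IsCompact (univ.pi fun _ : Fin n => K) :=
    isCompact_univ_pi fun _ => WeakDual.isCompact_closedBall 0 r
  obtain ⟨F, hFA, hF, hCF⟩ := exists_finite_subset_forall_mem_compact hC hA hδ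
  refine ⟨F, hFA, hF, fun s hs hsr => ?_⟩
  obtain ⟨G, hGs, hsG⟩ := s.exists_fin_tuple_of_card_le hs
  have hGK : (fun i => StrongDual.toWeakDual (G i)) ∈ univ.pi fun _ : Fin n => K := by
    intro i _
    rcases hGs i with hi | hi
    · simpa [K, hi] using hr
    · simpa [K] using hsr _ hi
  obtain ⟨a, haF, ha⟩ := hCF _ hGK
  refine ⟨a, haF, fun f hf => ?_⟩
  obtain ⟨i, rfl⟩ := hsG f hf
  exact ha i

theorem countableFanTightAt_zero [ProperSpace 𝕜] : CountableFanTightAt (WeakSpace 𝕜 E) 0 := by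
  intro A hA
  choose F hFA hF hFs using fun k : ℕ => exists_finite_subset_forall_card_le_norm_le k
    k.cast_nonneg (hA k) (Nat.one_div_pos_of_nat (α := ℝ) (n := k))
  refine ⟨F, hFA, hF, mem_closure_zero_iff.2 fun s ε hε => ?_⟩
  obtain ⟨n, hn⟩ := exists_nat_one_div_lt hε
  obtain ⟨m, hm⟩ := exists_nat_ge (∑ f ∈ s, ‖f‖)
  let k := max (max n s.card) m
  have hsk : ∀ f ∈ s, ‖f‖ ≤ k := fun f hf => calc
    ‖f‖ ≤ ∑ f ∈ s, ‖f‖ := Finset.single_le_sum (fun f _ => norm_nonneg f) hf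
    _ ≤ m := hm
    _ ≤ k := by exact_mod_cast le_max_right _ _
  obtain ⟨a, haF, ha⟩ := hFs k s ((le_max_right _ _).trans (le_max_left _ _)) hsk
  refine ⟨a, mem_iUnion.2 ⟨k, haF⟩, fun f hf => (ha f hf).trans_le ?_ |>.trans hn⟩
  exact Nat.one_div_le_one_div ((le_max_left _ _).trans (le_max_left _ _))

end NontriviallyNormedField

section RCLike

variable {𝕜 E : Type*} [RCLike 𝕜] [NormedAddCommGroup E] [NormedSpace 𝕜 E]

theorem isBounded_range_of_tendsto (u : ℕ → E) {x : WeakSpace 𝕜 E}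
    (hu : Tendsto (fun n => toWeakSpace 𝕜 E (u n)) atTop (𝓝 x)) :
    Bornology.IsBounded (range u) := by
  have hbdd : ∀ f : StrongDual 𝕜 E,
      ∃ C, ∀ n, ‖NormedSpace.inclusionInDoubleDualLi 𝕜 (u n) f‖ ≤ C := by
    intro f
    have hf : Tendsto (fun n => f (u n)) atTop (𝓝 (f x)) :=
      ((WeakBilin.eval_continuous (topDualPairing 𝕜 E).flip f).tendsto x).comp hu
    obtain ⟨C, hC⟩ := isBounded_iff_forall_norm_le.1 (Metric.isBounded_range_of_tendsto _ hf)
    exact ⟨C, fun n => hC _ (mem_range_self n)⟩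
  obtain ⟨C, hC⟩ := banach_steinhaus hbdd
  refine isBounded_iff_forall_norm_le.2 ⟨C, forall_mem_range.2 fun n => ?_⟩
  simpa only [LinearIsometry.norm_map] using hC n

theorem not_isCountablyGenerated_nhds_zero (hE : ¬FiniteDimensional 𝕜 E) :
    ¬(𝓝 (0 : WeakSpace 𝕜 E)).IsCountablyGenerated := by
  intro
  obtain ⟨V, hV⟩ := (𝓝 (0 : WeakSpace 𝕜 E)).exists_antitone_basis
  choose u hu huV using fun n : ℕ => exists_lt_norm_mem_of_mem_nhds_zero hE (hV.mem n) n
  obtain ⟨C, hC⟩ := isBounded_iff_forall_norm_le.1 (isBounded_range_of_tendsto u (hV.tendsto huV))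
  obtain ⟨n, hn⟩ := exists_nat_gt C
  exact (hn.trans (hu n)).not_ge (hC _ (mem_range_self n))

end RCLike

end WeakSpace

theorem finiteDimensional_of_weak_strongPytkeev_general
    {E : Type*} [NormedAddCommGroup E] [NormedSpace ℝ E]
    (h : ∀ x : WeakSpace ℝ E, StrongPytkeevAt (WeakSpace ℝ E) x) :
    FiniteDimensional ℝ E := by
  by_contra hE
  exact WeakSpace.not_isCountablyGenerated_nhds_zero hE
    ((h 0).isCountablyGenerated_nhds WeakSpace.countableFanTightAt_zero)

/-- Corollary 2.2 (for Banach spaces): if a Banach space with the weak topology has the strong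
Pytkeev property, then it is finite-dimensional. -/
theorem finiteDimensional_of_weak_strongPytkeev
    {E : Type*} [NormedAddCommGroup E] [NormedSpace ℝ E] [CompleteSpace E]
    (h : ∀ x : WeakSpace ℝ E, StrongPytkeevAt (WeakSpace ℝ E) x) :
    FiniteDimensional ℝ E :=
  finiteDimensional_of_weak_strongPytkeev_general h
end
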